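/- arXiv:2312.06938 — 6 statements merged into one kernel-verified Lean document; each statement's English description precedes it below -/
import Mathlib

section
/- Let A ⊆ ℝⁿ, let p ∈ closure(A), and let h : ℝⁿ → ℝⁿ be a bi-Lipschitz homeomorphism. If A satisfies condition (SSP) at p, then there exists a bi-Lipschitz homeomorphism h̃ : ℝⁿ → ℝⁿ with h̃(0) = 0 such that h̃(LD_p(A)) ⊆ LD_{h(p)}(h(A)). -/
open Filter Topology Set Asymptotics

variable {E : Type*} [NormedAddCommGroup E] [NormedSpace ℝ E]

/-- The direction set `D_p(A)`. -/
def dirSet (A : Set E) (p : E) : Set E :=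
  {a | ‖a‖ = 1 ∧ ∃ x : ℕ → E, (∀ i, x i ∈ A ∧ x i ≠ p) ∧
    Tendsto x atTop (𝓝 p) ∧
    Tendsto (fun i => ‖x i - p‖⁻¹ • (x i - p)) atTop (𝓝 a)}

/-- The real tangent cone `LD_p(A)`. -/
def LDir (A : Set E) (p : E) : Set E :=
  {w | ∃ a ∈ dirSet A p, ∃ t : ℝ, 0 ≤ t ∧ w = t • a}

/-- Condition (SSP) at `p`. -/
def SSP (A : Set E) (p : E) : Prop :=
  ∀ a : ℕ → E, (∀ m, a m ≠ p) → Tendsto a atTop (𝓝 p) →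
    (∃ d ∈ dirSet A p, Tendsto (fun m => ‖a m - p‖⁻¹ • (a m - p)) atTop (𝓝 d)) →
    ∃ b : ℕ → E, (∀ m, b m ∈ A) ∧
      Tendsto (fun m => ‖a m - b m‖ / ‖a m - p‖) atTop (𝓝 0) ∧
      Tendsto (fun m => ‖a m - b m‖ / ‖b m - p‖) atTop (𝓝 0)

/-- The geometric directional bundle fiber `𝒢D_p(A)`. -/
def GDir (A : Set E) (p : E) : Set E :=
  {a | ‖a‖ = 1 ∧ ∃ q : ℕ → E, (∀ m, q m ∈ A) ∧ Tendsto q atTop (𝓝 p) ∧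
    ∃ u : ℕ → E, (∀ m, u m ∈ dirSet A (q m)) ∧ Tendsto u atTop (𝓝 a)}

/-- The cone `L𝒢D_p(A)` over the geometric directional bundle fiber. -/
def LGDir (A : Set E) (p : E) : Set E :=
  {w | ∃ a ∈ GDir A p, ∃ t : ℝ, 0 ≤ t ∧ w = t • a}

/-- A bi-Lipschitz homeomorphism of `E`: a bijection which is Lipschitz with
Lipschitz inverse (equivalently, antilipschitz). -/
def IsBiLipschitz (h : E → E) : Prop :=
  Function.Bijective h ∧ ∃ K K' : NNReal, LipschitzWith K h ∧ AntilipschitzWith K' h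

/-!
The blow-ups `h_t : x ↦ t⁻¹ (h (p + t x) - h p)` of `h` at `p` are uniformly bi-Lipschitz, so
by Tychonoff they have a pointwise cluster point `h̃` as `t → 0`, which is again bi-Lipschitz:
Lipschitz bounds pass to pointwise limits, and equi-Lipschitz continuity lets the identities
`h_t⁻¹ ∘ h_t = id` pass to the limit as well. If `v ∈ LD_p(A)` is nonzero and
`h_{s_j}(v) → h̃(v)`, (SSP) gives points `b_j ∈ A` with `(b_j - p) / s_j → v`; then
`(h(b_j) - h(p)) / s_j → h̃(v) ≠ 0`, which exhibits `h̃(v)` as a tangent vector of `h(A)` at `h(p)`.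
-/

open scoped NNReal

lemma mem_dirSet_of_eventually {A : Set E} {p a : E} {x : ℕ → E}
    (hx : ∀ᶠ i in atTop, x i ∈ A ∧ x i ≠ p) (hxp : Tendsto x atTop (𝓝 p))
    (hdir : Tendsto (fun i => ‖x i - p‖⁻¹ • (x i - p)) atTop (𝓝 a)) (ha : ‖a‖ = 1) :
    a ∈ dirSet A p := by
  obtain ⟨N, hN⟩ := eventually_atTop.1 hx
  exact ⟨ha, fun i => x (i + N), fun i => hN _ (Nat.le_add_left N i),
    (tendsto_add_atTop_iff_nat N).2 hxp, (tendsto_add_atTop_iff_nat N).2 hdir⟩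

lemma mem_LDir_of_mem_dirSet {A : Set E} {p a : E} (ha : a ∈ dirSet A p) : a ∈ LDir A p :=
  ⟨a, ha, 1, zero_le_one, (one_smul ℝ a).symm⟩

lemma zero_mem_LDir_of_mem {A : Set E} {p w : E} (hw : w ∈ LDir A p) : (0 : E) ∈ LDir A p := by
  obtain ⟨a, ha, -⟩ := hw
  exact ⟨a, ha, 0, le_rfl, (zero_smul ℝ a).symm⟩

lemma inv_norm_smul_smul_of_pos {c : ℝ} (hc : 0 < c) (y : E) :
    ‖c • y‖⁻¹ • (c • y) = ‖y‖⁻¹ • y := by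
  rw [norm_smul, Real.norm_of_nonneg hc.le, smul_smul]
  congr 1
  field_simp

lemma mem_LDir_of_tendsto_smul_sub {A : Set E} {q w : E} {x : ℕ → E} {s : ℕ → ℝ}
    (hxA : ∀ j, x j ∈ A) (hs0 : ∀ j, 0 < s j) (hs : Tendsto s atTop (𝓝 0)) (hw0 : w ≠ 0)
    (hw : Tendsto (fun j => (s j)⁻¹ • (x j - q)) atTop (𝓝 w)) : w ∈ LDir A q := by
  set y := fun j => (s j)⁻¹ • (x j - q)
  have hxq : ∀ j, x j - q = s j • y j := fun j => (smul_inv_smul₀ (hs0 j).ne' _).symm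
  refine ⟨‖w‖⁻¹ • w, mem_dirSet_of_eventually (x := x) ?_ ?_ ?_ (norm_smul_inv_norm hw0), ‖w‖,
    norm_nonneg w, (smul_inv_smul₀ (norm_ne_zero_iff.2 hw0) w).symm⟩
  · filter_upwards [hw.eventually_ne hw0] with j hj
    exact ⟨hxA j, fun hx => hj (by simp [y, hx])⟩
  · rw [← tendsto_sub_nhds_zero_iff]
    simpa [hxq] using hs.smul hw
  · simp_rw [hxq, inv_norm_smul_smul_of_pos (hs0 _)]
    exact (hw.norm.inv₀ (norm_ne_zero_iff.2 hw0)).smul hw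

lemma SSP.exists_tendsto_smul_sub {A : Set E} {p v : E} (hssp : SSP A p) (hv : v ∈ LDir A p)
    (hv0 : v ≠ 0) {s : ℕ → ℝ} (hs0 : ∀ j, 0 < s j) (hs : Tendsto s atTop (𝓝 0)) :
    ∃ b : ℕ → E, (∀ j, b j ∈ A) ∧ Tendsto (fun j => (s j)⁻¹ • (b j - p)) atTop (𝓝 v) := by
  obtain ⟨a, ha, τ, hτ_nonneg, rfl⟩ := hv
  have hτ : 0 < τ := hτ_nonneg.lt_of_ne (by rintro rfl; simp at hv0)
  set x := fun j => p + s j • τ • a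
  have hxp : ∀ j, ‖x j - p‖ = s j * τ := fun j => by
    simp [x, norm_smul, ha.1, abs_of_pos (hs0 j), abs_of_pos hτ]
  have hx_ne : ∀ j, x j ≠ p := fun j hj => by
    have := hxp j
    rw [hj, sub_self, norm_zero] at this
    exact (mul_pos (hs0 j) hτ).ne this
  have hx_dir : ∀ j, ‖x j - p‖⁻¹ • (x j - p) = a := fun j => by
    have := (hs0 j).ne'
    rw [hxp, add_sub_cancel_left, smul_smul, smul_smul]
    convert one_smul ℝ a
    field_simp
  have hx_lim : Tendsto x atTop (𝓝 p) := by
    simpa [x] using tendsto_const_nhds.add (hs.smul_const (τ • a))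
  obtain ⟨b, hbA, hb, -⟩ := hssp x hx_ne hx_lim
    ⟨a, ha, tendsto_const_nhds.congr fun j => (hx_dir j).symm⟩
  refine ⟨b, hbA, tendsto_iff_norm_sub_tendsto_zero.2 ?_⟩
  have hb' := hb.mul_const τ
  rw [zero_mul] at hb'
  refine hb'.congr fun j => ?_
  have hsj := (hs0 j).ne'
  have hbx : (s j)⁻¹ • (b j - p) - τ • a = (s j)⁻¹ • (b j - x j) := by
    simp only [x, smul_sub, smul_add, inv_smul_smul₀ hsj]
    abel
  rw [hxp, norm_sub_rev, hbx, norm_smul,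
    Real.norm_of_nonneg (inv_nonneg.2 (hs0 j).le)]
  field_simp

section BlowUp

variable {F : Type*} [NormedAddCommGroup F] [NormedSpace ℝ F]

noncomputable def blowUp (h : E → F) (p : E) (t : ℝ) (x : E) : F := t⁻¹ • (h (p + t • x) - h p)

@[simp]
lemma blowUp_zero (h : E → F) (p : E) (t : ℝ) : blowUp h p t 0 = 0 := by
  simp [blowUp]

lemma blowUp_smul_inv_sub (h : E → F) (p : E) {t : ℝ} (ht : t ≠ 0) (y : E) :
    blowUp h p t (t⁻¹ • (y - p)) = t⁻¹ • (h y - h p) := by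
  simp [blowUp, smul_inv_smul₀ ht]

lemma blowUp_rightInverse {h : E → F} {g : F → E} (hl : Function.LeftInverse g h)
    (hr : Function.RightInverse g h) (p : E) {t : ℝ} (ht : t ≠ 0) :
    Function.RightInverse (blowUp g (h p) t) (blowUp h p t) := fun y => by
  have hg : blowUp g (h p) t y = t⁻¹ • (g (h p + t • y) - p) := by rw [blowUp, hl p]
  rw [hg, blowUp_smul_inv_sub h p ht, hr, add_sub_cancel_left, inv_smul_smul₀ ht]

lemma blowUp_leftInverse {h : E → F} {g : F → E} (hl : Function.LeftInverse g h)
    (hr : Function.RightInverse g h) (p : E) {t : ℝ} (ht : t ≠ 0) :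
    Function.LeftInverse (blowUp g (h p) t) (blowUp h p t) := by
  have := blowUp_rightInverse hr hl (h p) ht
  rwa [hl p] at this

lemma LipschitzWith.blowUp {K : ℝ≥0} {h : E → F} (hh : LipschitzWith K h) (p : E) (t : ℝ) :
    LipschitzWith K (blowUp h p t) := by
  refine LipschitzWith.of_dist_le_mul fun x y => ?_
  have hxy := hh.dist_le_mul (p + t • x) (p + t • y)
  rw [dist_add_left, dist_smul₀] at hxy
  rw [_root_.blowUp, _root_.blowUp, dist_smul₀, dist_sub_right, norm_inv]
  rcases eq_or_ne t 0 with rfl | ht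
  · simp
    positivity
  calc ‖t‖⁻¹ * dist (h (p + t • x)) (h (p + t • y)) ≤ ‖t‖⁻¹ * (K * (‖t‖ * dist x y)) := by
        gcongr
    _ = K * dist x y := by field_simp

end BlowUp

lemma MapClusterPt.rightInverse {ι X Y : Type*} [PseudoMetricSpace X] [MetricSpace Y]
    {l : Filter ι} {F : ι → X → Y} {G : ι → Y → X} {f : X → Y} {g : Y → X} {K : ℝ≥0}
    (hc : MapClusterPt (f, g) l fun i => (F i, G i)) (hF : ∀ i, LipschitzWith K (F i))
    (hFG : ∀ i, Function.RightInverse (G i) (F i)) : Function.RightInverse g f := fun y => by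
  set z := g y
  have hS : IsClosed
      {q : (X → Y) × (Y → X) | dist (f z) y ≤ dist (f z) (q.1 z) + K * dist (q.2 y) z} :=
    isClosed_le continuous_const (by fun_prop)
  have hlim := hS.mem_of_mapClusterPt hc (Eventually.of_forall fun i => ?_)
  · simpa [z] using hlim
  calc dist (f z) y = dist (f z) (F i (G i y)) := by rw [hFG i y]
    _ ≤ dist (f z) (F i z) + dist (F i z) (F i (G i y)) := dist_triangle _ _ _
    _ ≤ dist (f z) (F i z) + K * dist (G i y) z := by
        rw [dist_comm (F i z)]
        gcongr
        exact (hF i).dist_le_mul _ _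

theorem IsBiLipschitz.exists_mapClusterPt_blowUp [ProperSpace E] {h : E → E}
    (hh : IsBiLipschitz h) (p : E) {t : ℕ → ℝ} (ht : ∀ m, t m ≠ 0) :
    ∃ f : E → E, IsBiLipschitz f ∧ f 0 = 0 ∧
      ∀ x, MapClusterPt (f x) atTop fun m => blowUp h p (t m) x := by
  obtain ⟨hbij, K, K', hK, hK'⟩ := hh
  set e := Equiv.ofBijective h hbij
  have hK'e : LipschitzWith K' e.symm := hK'.to_rightInverse e.right_inv
  have hU : IsCompact ((univ.pi fun x : E => Metric.closedBall (0 : E) (K * ‖x‖)) ×ˢ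
      (univ.pi fun y : E => Metric.closedBall (0 : E) (K' * ‖y‖))) :=
    (isCompact_univ_pi fun _ => isCompact_closedBall _ _).prod
      (isCompact_univ_pi fun _ => isCompact_closedBall _ _)
  obtain ⟨⟨f, g⟩, hfgU, hc⟩ := hU.exists_mapClusterPt (f := atTop)
    (u := fun m => (blowUp h p (t m), blowUp e.symm (h p) (t m))) <|
    tendsto_principal.2 <| Eventually.of_forall fun m =>
      ⟨fun x _ => mem_closedBall_zero_iff.2 ((hK.blowUp p _).norm_le_mul (blowUp_zero ..) x),
        fun y _ => mem_closedBall_zero_iff.2 ((hK'e.blowUp _ _).norm_le_mul (blowUp_zero ..) y)⟩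
  have hfK : LipschitzWith K f := ((isClosed_setOfPred_lipschitzWith K).preimage
    continuous_fst).mem_of_mapClusterPt hc (Eventually.of_forall fun m => hK.blowUp p (t m))
  have hgK' : LipschitzWith K' g := ((isClosed_setOfPred_lipschitzWith K').preimage
    continuous_snd).mem_of_mapClusterPt hc (Eventually.of_forall fun m => hK'e.blowUp _ (t m))
  have hfg : Function.RightInverse g f := hc.rightInverse (fun m => hK.blowUp p (t m))
    fun m => blowUp_rightInverse e.left_inv e.right_inv p (ht m)
  have hgf : Function.LeftInverse g f :=
    (hc.continuousAt_comp continuous_swap.continuousAt).rightInverse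
      (fun m => hK'e.blowUp _ (t m)) fun m =>
        blowUp_leftInverse e.left_inv e.right_inv p (ht m)
  refine ⟨f, ⟨⟨hgf.injective, hfg.surjective⟩, K, K', hfK, hgK'.to_rightInverse hgf⟩, ?_,
    fun x => hc.continuousAt_comp ((continuous_apply x).comp continuous_fst).continuousAt⟩
  simpa using hfgU.1 0 (mem_univ _)

lemma mem_LDir_image_of_tendsto_blowUp {A : Set E} {p v w : E} {h : E → E} {K : ℝ≥0}
    (hssp : SSP A p) (hh : LipschitzWith K h) (hv : v ∈ LDir A p) (hv0 : v ≠ 0)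
    {s : ℕ → ℝ} (hs0 : ∀ j, 0 < s j) (hs : Tendsto s atTop (𝓝 0)) (hw0 : w ≠ 0)
    (hw : Tendsto (fun j => blowUp h p (s j) v) atTop (𝓝 w)) : w ∈ LDir (h '' A) (h p) := by
  obtain ⟨b, hbA, hb⟩ := hssp.exists_tendsto_smul_sub hv hv0 hs0 hs
  refine mem_LDir_of_tendsto_smul_sub (fun j => mem_image_of_mem h (hbA j)) hs0 hs hw0 ?_
  refine hw.congr_dist (squeeze_zero (fun _ => dist_nonneg) (fun j => ?_)
    (by simpa using (hb.dist (tendsto_const_nhds (x := v))).const_mul (K : ℝ)))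
  rw [← blowUp_smul_inv_sub h p (hs0 j).ne', dist_comm]
  exact (hh.blowUp p (s j)).dist_le_mul _ _

theorem stmt0_general {n : ℕ} (A : Set (EuclideanSpace ℝ (Fin n)))
    (p : EuclideanSpace ℝ (Fin n))
    (h : EuclideanSpace ℝ (Fin n) → EuclideanSpace ℝ (Fin n))
    (hh : IsBiLipschitz h) (hssp : SSP A p) :
    ∃ ht : EuclideanSpace ℝ (Fin n) → EuclideanSpace ℝ (Fin n),
      IsBiLipschitz ht ∧ ht 0 = 0 ∧
      ht '' LDir A p ⊆ LDir (h '' A) (h p) := by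
  set t : ℕ → ℝ := fun m => 1 / ((m : ℝ) + 1)
  have ht0 : ∀ m, 0 < t m := fun m => by positivity
  obtain ⟨f, hf, hf0, hfc⟩ := hh.exists_mapClusterPt_blowUp p fun m => (ht0 m).ne'
  refine ⟨f, hf, hf0, ?_⟩
  obtain ⟨-, K, -, hK, -⟩ := hh
  have key : ∀ v ∈ LDir A p, v ≠ 0 → f v ∈ LDir (h '' A) (h p) := fun v hv hv0 => by
    obtain ⟨φ, hφ, hlim⟩ := (hfc v).tendsto_subseq
    exact mem_LDir_image_of_tendsto_blowUp hssp hK hv hv0 (fun j => ht0 (φ j))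
      (tendsto_one_div_add_atTop_nhds_zero_nat.comp hφ.tendsto_atTop)
      (hf.1.1.ne_iff' hf0 |>.2 hv0) hlim
  rintro _ ⟨v, hv, rfl⟩
  rcases eq_or_ne v 0 with rfl | hv0
  · obtain ⟨a, ha, -⟩ := hv
    rw [hf0]
    exact zero_mem_LDir_of_mem <| key a (mem_LDir_of_mem_dirSet ha) <|
      norm_ne_zero_iff.1 (ha.1 ▸ one_ne_zero)
  · exact key v hv hv0

/-- If `A` satisfies (SSP) at `p ∈ closure A` and `h` is a bi-Lipschitz
homeomorphism, then some bi-Lipschitz homeomorphism `h̃` fixing `0` satisfies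
`h̃(LD_p(A)) ⊆ LD_{h(p)}(h(A))`. -/
theorem stmt0 {n : ℕ} (A : Set (EuclideanSpace ℝ (Fin n)))
    (p : EuclideanSpace ℝ (Fin n)) (hp : p ∈ closure A)
    (h : EuclideanSpace ℝ (Fin n) → EuclideanSpace ℝ (Fin n))
    (hh : IsBiLipschitz h) (hssp : SSP A p) :
    ∃ ht : EuclideanSpace ℝ (Fin n) → EuclideanSpace ℝ (Fin n),
      IsBiLipschitz ht ∧ ht 0 = 0 ∧
      ht '' LDir A p ⊆ LDir (h '' A) (h p) :=
  stmt0_general A p h hh hssp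
end

section
/- Let A ⊆ ℝⁿ with 0 ∈ closure(A) and let h : ℝⁿ → ℝⁿ be a bi-Lipschitz homeomorphism with h(0) = 0 such that for every v ∈ D(A) the limit lim_{t→0⁺} h(t·v)/t exists. If A satisfies condition (SSP) at 0, then h(A) satisfies condition (SSP) at 0. -/
/-!
Choose `y i ∈ A` with `h (y i)` tending to `0` in the direction `d ∈ D(h A)`. By compactness
of the sphere, along a subsequence the `y i` have a direction `v ∈ D(A)`. As `h` is Lipschitz,
`h (y i) / ‖y i‖` has the same limit `L` as `h (t v) / t`, and as `h⁻¹` is Lipschitz, `L ≠ 0`;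
hence `d = L / ‖L‖`. Given `a m → 0` in the direction `d`, put `s m = ‖a m‖ / ‖L‖` and apply
(SSP) for `A` to the points `s m • v`, which gives `b m ∈ A` with `s m • v - b m = o(s m)`.
Then `a m - h (b m)` is the sum of `a m - s m • L`, `s m • L - h (s m • v)` and
`h (s m • v) - h (b m)`, each `o(‖a m‖)`; this little-o estimate is equivalent to the two
ratio conditions of (SSP).
-/

open Filter Topology Set Asymptotics

variable {E : Type*} [NormedAddCommGroup E] [NormedSpace ℝ E]

theorem ssp_iff_isLittleO {A : Set E} {p : E} :
    SSP A p ↔ ∀ a : ℕ → E, (∀ m, a m ≠ p) → Tendsto a atTop (𝓝 p) →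
      (∃ d ∈ dirSet A p, Tendsto (fun m => ‖a m - p‖⁻¹ • (a m - p)) atTop (𝓝 d)) →
      ∃ b : ℕ → E, (∀ m, b m ∈ A) ∧ (fun m => a m - b m) =o[atTop] fun m => a m - p := by
  refine forall₄_congr fun a ha _ _ => exists_congr fun b => and_congr_right fun _ => ?_
  have hratio : Tendsto (fun m => ‖a m - b m‖ / ‖a m - p‖) atTop (𝓝 0) ↔
      (fun m => a m - b m) =o[atTop] fun m => a m - p := by
    rw [← isLittleO_norm_norm, isLittleO_iff_tendsto'
      (.of_forall fun m h => absurd (norm_eq_zero.1 h) (sub_ne_zero.2 (ha m)))]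
  rw [← hratio]
  refine ⟨And.left, fun h => ⟨h, ?_⟩⟩
  have ho := hratio.1 h
  have hb : (fun m => a m - p) =O[atTop] fun m => b m - p := by
    simpa using ho.right_isBigO_sub
  exact (isLittleO_norm_norm.2 (ho.trans_isBigO hb)).tendsto_div_nhds_zero

theorem SSP.exists_isLittleO_smul_sub {A : Set E} (hA : SSP A 0) {v : E} (hv : v ∈ dirSet A 0)
    {s : ℕ → ℝ} (hs : ∀ m, 0 < s m) (hs0 : Tendsto s atTop (𝓝 0)) :
    ∃ b : ℕ → E, (∀ m, b m ∈ A) ∧ (fun m => s m • v - b m) =o[atTop] s := by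
  have hv1 : ‖v‖ = 1 := hv.1
  have hnorm : ∀ m, ‖s m • v‖ = s m := fun m => by
    rw [norm_smul, hv1, mul_one, Real.norm_of_nonneg (hs m).le]
  have hdir : ∀ m, ‖s m • v - 0‖⁻¹ • (s m • v - 0) = v := fun m => by
    rw [sub_zero, hnorm, inv_smul_smul₀ (hs m).ne']
  obtain ⟨b, hbA, hb⟩ := ssp_iff_isLittleO.1 hA (fun m => s m • v)
    (fun m => by rw [← norm_ne_zero_iff, hnorm]; exact (hs m).ne')
    (by simpa using hs0.smul_const v) ⟨v, hv, by simp only [hdir, tendsto_const_nhds]⟩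
  refine ⟨b, hbA, ?_⟩
  simpa [hnorm, Real.norm_of_nonneg (hs _).le] using isLittleO_norm_right.2 hb

theorem isLittleO_sub_norm_smul_of_tendsto {α : Type*} {l : Filter α} {a : α → E} {d : E}
    (had : Tendsto (fun m => ‖a m‖⁻¹ • a m) l (𝓝 d)) :
    (fun m => a m - ‖a m‖ • d) =o[l] a := by
  have hsmall : (fun m => ‖a m‖⁻¹ • a m - d) =o[l] fun _ => (1 : ℝ) :=
    (isLittleO_one_iff ℝ).2 (by simpa using had.sub_const d)
  refine isLittleO_norm_right.1
    (((isBigO_refl (fun m => ‖a m‖) l).smul_isLittleO hsmall).congr'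
      (.of_forall fun m => ?_) (.of_forall fun m => by simp))
  rcases eq_or_ne (a m) 0 with h | h
  · simp [h]
  · simp only [smul_sub, smul_inv_smul₀ (norm_ne_zero_iff.2 h)]

theorem isLittleO_sub_smul_of_tendsto_inv_smul {f : ℝ → E} {L : E}
    (hf : Tendsto (fun t => t⁻¹ • f t) (𝓝[>] 0) (𝓝 L)) :
    (fun t => f t - t • L) =o[𝓝[>] 0] id := by
  have hsmall : (fun t => t⁻¹ • f t - L) =o[𝓝[>] 0] fun _ => (1 : ℝ) :=
    (isLittleO_one_iff ℝ).2 (by simpa using hf.sub_const L)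
  refine ((isBigO_refl id _).smul_isLittleO hsmall).congr'
    (eventually_mem_nhdsWithin.mono fun t (ht : 0 < t) => ?_) (.of_forall fun t => by simp)
  simp [smul_sub, smul_inv_smul₀ ht.ne']

theorem exists_mem_dirSet_tendsto_subseq [ProperSpace E] {A : Set E} {p : E} {y : ℕ → E}
    (hyA : ∀ i, y i ∈ A) (hyp : ∀ i, y i ≠ p) (hy : Tendsto y atTop (𝓝 p)) :
    ∃ v ∈ dirSet A p, ∃ φ : ℕ → ℕ, StrictMono φ ∧
      Tendsto (fun i => ‖y (φ i) - p‖⁻¹ • (y (φ i) - p)) atTop (𝓝 v) := by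
  have hsphere : ∀ i, ‖y i - p‖⁻¹ • (y i - p) ∈ Metric.sphere (0 : E) 1 := fun i => by
    simpa using norm_smul_inv_norm (𝕜 := ℝ) (sub_ne_zero.2 (hyp i))
  obtain ⟨v, hv, φ, hφ, hyv⟩ := (isCompact_sphere (0 : E) 1).tendsto_subseq hsphere
  exact ⟨v, ⟨mem_sphere_zero_iff_norm.1 hv, y ∘ φ, fun i => ⟨hyA _, hyp _⟩,
    hy.comp hφ.tendsto_atTop, hyv⟩, φ, hφ, hyv⟩

theorem LipschitzWith.tendsto_inv_norm_smul_apply {F : Type*} [NormedAddCommGroup F]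
    [NormedSpace ℝ F] {h : E → F} {K : NNReal} (hK : LipschitzWith K h) {v : E} {L : F}
    (hL : Tendsto (fun t : ℝ => t⁻¹ • h (t • v)) (𝓝[>] 0) (𝓝 L))
    {α : Type*} {l : Filter α} {y : α → E} (hy : ∀ i, y i ≠ 0) (hy0 : Tendsto y l (𝓝 0))
    (hyv : Tendsto (fun i => ‖y i‖⁻¹ • y i) l (𝓝 v)) :
    Tendsto (fun i => ‖y i‖⁻¹ • h (y i)) l (𝓝 L) := by
  have hpos : ∀ i, 0 < ‖y i‖ := fun i => norm_pos_iff.2 (hy i)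
  have hnorm : Tendsto (fun i => ‖y i‖) l (𝓝[>] 0) :=
    tendsto_nhdsWithin_iff.2 ⟨by simpa using hy0.norm, .of_forall hpos⟩
  have hclose : Tendsto (fun i => ‖y i‖⁻¹ • h (y i) - ‖y i‖⁻¹ • h (‖y i‖ • v)) l (𝓝 0) := by
    refine squeeze_zero_norm (fun i => ?_)
      (by simpa using (hyv.sub_const v).norm.const_mul (K : ℝ))
    have hsub : ‖y i‖⁻¹ • y i - v = ‖y i‖⁻¹ • (y i - ‖y i‖ • v) := by
      rw [smul_sub, inv_smul_smul₀ (hpos i).ne']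
    calc ‖‖y i‖⁻¹ • h (y i) - ‖y i‖⁻¹ • h (‖y i‖ • v)‖
        = ‖y i‖⁻¹ * ‖h (y i) - h (‖y i‖ • v)‖ := by
          rw [← smul_sub, norm_smul, norm_inv, norm_norm]
      _ ≤ ‖y i‖⁻¹ * (K * ‖y i - ‖y i‖ • v‖) := by gcongr; exact hK.norm_sub_le _ _
      _ = K * ‖‖y i‖⁻¹ • y i - v‖ := by
          rw [hsub, norm_smul, norm_inv, norm_norm]; ring
  simpa using hclose.add (hL.comp hnorm)

theorem exists_mem_dirSet_of_mem_dirSet_image [ProperSpace E] {F : Type*}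
    [NormedAddCommGroup F] [NormedSpace ℝ F] {A : Set E} {h : E → F} {K K' : NNReal}
    (hK : LipschitzWith K h) (hK' : AntilipschitzWith K' h) (hh0 : h 0 = 0) {d : F}
    (hd : d ∈ dirSet (h '' A) 0) :
    ∃ v ∈ dirSet A 0, ∀ L : F, Tendsto (fun t : ℝ => t⁻¹ • h (t • v)) (𝓝[>] 0) (𝓝 L) →
      L ≠ 0 ∧ ‖L‖⁻¹ • L = d := by
  obtain ⟨-, x, hx, hx0, hxd⟩ := hd
  choose y hyA hyx using fun i => (hx i).1
  have hy : ∀ i, y i ≠ 0 := fun i hy => (hx i).2 (by rw [← hyx, hy, hh0])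
  have hy0 : Tendsto y atTop (𝓝 0) :=
    (hK'.isUniformInducing hK.uniformContinuous).isInducing.tendsto_nhds_iff.2
      (by simpa [Function.comp_def, hyx, hh0] using hx0)
  obtain ⟨v, hv, φ, hφ, hyv⟩ := exists_mem_dirSet_tendsto_subseq hyA hy hy0
  simp only [sub_zero] at hyv hxd
  refine ⟨v, hv, fun L hL => ?_⟩
  have hw := hK.tendsto_inv_norm_smul_apply hL (fun i => hy (φ i))
    (hy0.comp hφ.tendsto_atTop) hyv
  have hL0 : L ≠ 0 := by
    have hbound : 1 ≤ (K' : ℝ) * ‖L‖ := ge_of_tendsto' (hw.norm.const_mul _) fun i => by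
      have hpos : 0 < ‖y (φ i)‖ := norm_pos_iff.2 (hy _)
      have hle : ‖y (φ i)‖ ≤ K' * ‖h (y (φ i))‖ := by
        simpa [hh0] using hK'.le_mul_dist (y (φ i)) 0
      rw [norm_smul, norm_inv, norm_norm, mul_left_comm, ← div_eq_inv_mul, le_div_iff₀ hpos]
      simpa using hle
    rintro rfl
    norm_num at hbound
  refine ⟨hL0, tendsto_nhds_unique (((hw.norm.inv₀ (norm_ne_zero_iff.2 hL0)).smul hw).congr
    fun i => ?_) (hxd.comp hφ.tendsto_atTop)⟩
  have hpos : ‖y (φ i)‖ ≠ 0 := norm_ne_zero_iff.2 (hy _)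
  rw [Function.comp_apply, ← hyx, norm_smul, norm_inv, norm_norm, smul_smul, mul_inv, inv_inv,
    mul_right_comm, mul_inv_cancel₀ hpos, one_mul]

theorem stmt5_general {n : ℕ} (A : Set (EuclideanSpace ℝ (Fin n)))
    (h : EuclideanSpace ℝ (Fin n) → EuclideanSpace ℝ (Fin n))
    (hh : IsBiLipschitz h) (hh0 : h 0 = 0)
    (hlim : ∀ v ∈ dirSet A 0, ∃ L : EuclideanSpace ℝ (Fin n),
      Tendsto (fun t : ℝ => t⁻¹ • h (t • v)) (𝓝[>] (0 : ℝ)) (𝓝 L))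
    (hssp : SSP A 0) :
    SSP (h '' A) 0 := by
  obtain ⟨-, K, K', hK, hK'⟩ := hh
  refine ssp_iff_isLittleO.2 fun a ha ha0 ⟨d, hd, had⟩ => ?_
  simp only [sub_zero] at had ⊢
  obtain ⟨v, hv, hvL⟩ := exists_mem_dirSet_of_mem_dirSet_image hK hK' hh0 hd
  obtain ⟨L, hL⟩ := hlim v hv
  obtain ⟨hL0, rfl⟩ := hvL L hL
  set s : ℕ → ℝ := fun m => ‖L‖⁻¹ * ‖a m‖
  have hs : ∀ m, 0 < s m := fun m =>
    mul_pos (inv_pos.2 (norm_pos_iff.2 hL0)) (norm_pos_iff.2 (ha m))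
  have hs0 : Tendsto s atTop (𝓝 0) := by simpa using ha0.norm.const_mul ‖L‖⁻¹
  have hsa : s =O[atTop] a := (isBigO_norm_left.2 (isBigO_refl a atTop)).const_mul_left _
  obtain ⟨b, hbA, hb⟩ := hssp.exists_isLittleO_smul_sub hv hs hs0
  have h₁ := isLittleO_sub_norm_smul_of_tendsto had
  have h₂ := ((isLittleO_sub_smul_of_tendsto_inv_smul hL).comp_tendsto
    (tendsto_nhdsWithin_iff.2 ⟨hs0, .of_forall hs⟩)).trans_isBigO hsa
  have h₃ := ((IsBigO.of_bound K (.of_forall fun m => hK.norm_sub_le (s m • v) (b m))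
    ).trans_isLittleO hb).trans_isBigO hsa
  refine ⟨fun m => h (b m), fun m => mem_image_of_mem h (hbA m),
    ((h₁.sub h₂).add h₃).congr_left fun m => ?_⟩
  simp only [s, Function.comp_apply, mul_smul, smul_comm ‖L‖⁻¹ ‖a m‖ L]
  abel

theorem stmt5 {n : ℕ} (A : Set (EuclideanSpace ℝ (Fin n)))
    (h0 : (0 : EuclideanSpace ℝ (Fin n)) ∈ closure A)
    (h : EuclideanSpace ℝ (Fin n) → EuclideanSpace ℝ (Fin n))
    (hh : IsBiLipschitz h) (hh0 : h 0 = 0)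
    (hlim : ∀ v ∈ dirSet A 0, ∃ L : EuclideanSpace ℝ (Fin n),
      Tendsto (fun t : ℝ => t⁻¹ • h (t • v)) (𝓝[>] (0 : ℝ)) (𝓝 L))
    (hssp : SSP A 0) :
    SSP (h '' A) 0 :=
  stmt5_general A h hh hh0 hlim hssp
end

section
/- Let A ⊆ ℝⁿ with 0 ∈ closure(A) and let h : ℝⁿ → ℝⁿ be a bi-Lipschitz homeomorphism with h(0) = 0 such that for every v ∈ D(A) the limit dh(v) := lim_{t→0⁺} h(t·v)/t exists. If A satisfies condition (SSP) at 0, then LD(h(A)) = LD(h(LD(A))) = {s · dh(v) : v ∈ D(A), s ≥ 0}. -/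
open Filter Topology Set Asymptotics

variable {E : Type*} [NormedAddCommGroup E] [NormedSpace ℝ E]

/-! Since `h` is Lipschitz, points `b_m = t_m v + o(t_m)` of `X` (with `t_m → 0⁺`) are sent to
`t_m dh(v) + o(t_m)`, and `dh(v) ≠ 0` because `h` is antilipschitz; so `dh(v)/‖dh(v)‖` is a
direction of `h(X)`. Conversely, by compactness of the unit sphere, any sequence of `X` tending to
`0` has a subsequence whose directions converge to some `v ∈ D(X)`, and then the directions of its
image converge to that of `dh(v)`. Hence `LD(h(X)) = ℝ₊ · dh(D(X))` whenever every direction of `X`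
is approximated by points of `X` in the above sense: for `X = A` this is what (SSP) provides, and
for `X = LD(A)` the ray itself does it, while `D(LD(A)) = D(A)` because `D(A)` is closed. -/

lemma continuousAt_normalize {x : E} (hx : x ≠ 0) : ContinuousAt NormedSpace.normalize x :=
  (continuous_norm.continuousAt.inv₀ (norm_ne_zero_iff.2 hx)).smul continuousAt_id

lemma tendsto_normalize_of_tendsto_inv_smul {ι : Type*} {l : Filter ι} {t : ι → ℝ}
    (ht : ∀ᶠ i in l, 0 < t i) {y : ι → E} {L : E} (hL : L ≠ 0)
    (hy : Tendsto (fun i => (t i)⁻¹ • y i) l (𝓝 L)) :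
    Tendsto (fun i => NormedSpace.normalize (y i)) l (𝓝 (NormedSpace.normalize L)) := by
  refine ((continuousAt_normalize hL).tendsto.comp hy).congr' ?_
  filter_upwards [ht] with i hti
  exact NormedSpace.normalize_smul_of_pos (inv_pos.2 hti) (y i)

lemma tendsto_one_div_add_one_nhdsGT_zero :
    Tendsto (fun m : ℕ => 1 / ((m : ℝ) + 1)) atTop (𝓝[>] 0) :=
  tendsto_nhdsWithin_iff.2 ⟨tendsto_one_div_add_atTop_nhds_zero_nat,
    Eventually.of_forall fun m => show (0:ℝ) < 1 / ((m : ℝ) + 1) by positivity⟩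

section Directions

variable {A X : Set E}

lemma mem_dirSet_zero_iff {a : E} :
    a ∈ dirSet A 0 ↔ ‖a‖ = 1 ∧ ∃ x : ℕ → E, (∀ i, x i ∈ A ∧ x i ≠ 0) ∧
      Tendsto x atTop (𝓝 0) ∧ Tendsto (fun i => NormedSpace.normalize (x i)) atTop (𝓝 a) := by
  simp only [dirSet, sub_zero, NormedSpace.normalize, mem_ofPred_eq]

lemma norm_eq_one_of_mem_dirSet {a : E} (ha : a ∈ dirSet A 0) : ‖a‖ = 1 := ha.1

lemma ne_zero_of_mem_dirSet {a : E} (ha : a ∈ dirSet A 0) : a ≠ 0 :=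
  ne_zero_of_norm_ne_zero ((norm_eq_one_of_mem_dirSet ha).symm ▸ one_ne_zero)

lemma mem_dirSet_zero_of_eventually {a : E} (ha : ‖a‖ = 1) {x : ℕ → E}
    (hx : ∀ᶠ i in atTop, x i ∈ A ∧ x i ≠ 0) (hx0 : Tendsto x atTop (𝓝 0))
    (hxa : Tendsto (fun i => NormedSpace.normalize (x i)) atTop (𝓝 a)) : a ∈ dirSet A 0 := by
  obtain ⟨N, hN⟩ := eventually_atTop.1 hx
  exact mem_dirSet_zero_iff.2 ⟨ha, fun i => x (i + N), fun i => hN _ (Nat.le_add_left N i),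
    hx0.comp (tendsto_add_atTop_nat N), hxa.comp (tendsto_add_atTop_nat N)⟩

lemma isClosed_dirSet_zero (A : Set E) : IsClosed (dirSet A 0) := by
  refine isSeqClosed_iff_isClosed.1 fun vs v hvs hlim => ?_
  have hε : ∀ i : ℕ, (0 : ℝ) < 1 / ((i : ℝ) + 1) := fun i => by positivity
  have hclose : ∀ i : ℕ, ∃ y : E, (y ∈ A ∧ y ≠ 0) ∧ y ∈ Metric.ball 0 (1 / ((i : ℝ) + 1)) ∧
      NormedSpace.normalize y ∈ Metric.ball (vs i) (1 / ((i : ℝ) + 1)) := by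
    intro i
    obtain ⟨-, x, hxA, hx0, hxv⟩ := mem_dirSet_zero_iff.1 (hvs i)
    obtain ⟨j, hj⟩ := ((hx0.eventually (Metric.ball_mem_nhds _ (hε i))).and
      (hxv.eventually (Metric.ball_mem_nhds _ (hε i)))).exists
    exact ⟨x j, hxA j, hj⟩
  choose y hyA hy0 hyv using hclose
  have hv : ‖v‖ = 1 := tendsto_nhds_unique hlim.norm <| by
    simpa only [norm_eq_one_of_mem_dirSet (hvs _)] using tendsto_const_nhds
  refine mem_dirSet_zero_iff.2 ⟨hv, y, hyA, ?_, ?_⟩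
  · refine tendsto_iff_dist_tendsto_zero.2 <| squeeze_zero (fun _ => dist_nonneg)
      (fun i => (hy0 i).le) tendsto_one_div_add_atTop_nhds_zero_nat
  · refine hlim.congr_dist <| squeeze_zero (fun _ => dist_nonneg)
      (fun i => ?_) tendsto_one_div_add_atTop_nhds_zero_nat
    rw [dist_comm]
    exact (hyv i).le

lemma exists_mem_dirSet_tendsto_normalize_subseq [ProperSpace E] {x : ℕ → E}
    (hx : ∀ i, x i ∈ A ∧ x i ≠ 0) (hx0 : Tendsto x atTop (𝓝 0)) :
    ∃ v ∈ dirSet A 0, ∃ φ : ℕ → ℕ, StrictMono φ ∧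
      Tendsto (fun m => NormedSpace.normalize (x (φ m))) atTop (𝓝 v) := by
  have hsph : ∀ i, NormedSpace.normalize (x i) ∈ Metric.sphere (0 : E) 1 := fun i =>
    mem_sphere_zero_iff_norm.2 (NormedSpace.norm_normalize (hx i).2)
  obtain ⟨v, hv, φ, hφ, hconv⟩ := (isCompact_sphere _ 1).tendsto_subseq hsph
  refine ⟨v, mem_dirSet_zero_iff.2 ⟨mem_sphere_zero_iff_norm.1 hv, x ∘ φ, fun i => hx (φ i),
    hx0.comp hφ.tendsto_atTop, hconv⟩, φ, hφ, hconv⟩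

/-- `X` contains points `t m • v + o(t m)` along some scales `t m → 0⁺`. -/
def RayApproximable (X : Set E) (v : E) : Prop :=
  ∃ t : ℕ → ℝ, Tendsto t atTop (𝓝[>] 0) ∧
    ∃ b : ℕ → E, (∀ m, b m ∈ X) ∧ Tendsto (fun m => (t m)⁻¹ • b m) atTop (𝓝 v)

lemma RayApproximable.normalize_mem_dirSet {v : E} (hX : RayApproximable X v) (hv : v ≠ 0) :
    NormedSpace.normalize v ∈ dirSet X 0 := by
  obtain ⟨t, ht, b, hbX, hb⟩ := hX
  have htpos : ∀ᶠ m in atTop, 0 < t m := (tendsto_nhdsWithin_iff.1 ht).2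
  refine mem_dirSet_zero_of_eventually (NormedSpace.norm_normalize hv) ?_ ?_
    (tendsto_normalize_of_tendsto_inv_smul htpos hv hb)
  · filter_upwards [htpos, hb.eventually_ne hv] with m htm hbm
    exact ⟨hbX m, fun h0 => hbm (by rw [h0, smul_zero])⟩
  · have hlim := (tendsto_nhdsWithin_iff.1 ht).1.smul hb
    rw [zero_smul] at hlim
    refine hlim.congr' ?_
    filter_upwards [htpos] with m htm
    rw [smul_inv_smul₀ htm.ne']

lemma rayApproximable_LDir {v : E} (hv : v ∈ dirSet A 0) : RayApproximable (LDir A 0) v := by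
  refine ⟨_, tendsto_one_div_add_one_nhdsGT_zero, fun m => (1 / ((m : ℝ) + 1)) • v,
    fun m => ⟨v, hv, _, by positivity, rfl⟩, tendsto_const_nhds.congr fun m => ?_⟩
  rw [inv_smul_smul₀ (by positivity)]

lemma SSP.rayApproximable (hA : SSP A 0) {v : E} (hv : v ∈ dirSet A 0) : RayApproximable A v := by
  set t : ℕ → ℝ := fun m => 1 / ((m : ℝ) + 1)
  have htpos : ∀ m, 0 < t m := fun m => by positivity
  have ht : Tendsto t atTop (𝓝[>] 0) := tendsto_one_div_add_one_nhdsGT_zero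
  have hv1 : ‖v‖ = 1 := norm_eq_one_of_mem_dirSet hv
  have hnorm : ∀ m, ‖t m • v‖ = t m := fun m => by
    rw [norm_smul, hv1, mul_one, Real.norm_of_nonneg (htpos m).le]
  obtain ⟨b, hbA, hb, -⟩ := hA (fun m => t m • v)
    (fun m h0 => by simpa [hnorm m, (htpos m).ne'] using congrArg norm h0)
    (by simpa using (tendsto_nhdsWithin_iff.1 ht).1.smul_const v)
    ⟨v, hv, tendsto_const_nhds.congr fun m => by
      rw [sub_zero, hnorm m, inv_smul_smul₀ (htpos m).ne']⟩
  refine ⟨t, ht, b, hbA, tendsto_const_nhds.congr_dist (hb.congr fun m => ?_)⟩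
  conv_rhs => rw [← inv_smul_smul₀ (htpos m).ne' v]
  rw [sub_zero, hnorm m, dist_smul₀, dist_eq_norm,
    Real.norm_of_nonneg (inv_nonneg.2 (htpos m).le), div_eq_inv_mul]

lemma normalize_mem_dirSet_of_mem_LDir {w : E} (hw : w ∈ LDir A 0) (hw0 : w ≠ 0) :
    NormedSpace.normalize w ∈ dirSet A 0 := by
  obtain ⟨a, ha, c, hc, rfl⟩ := hw
  have hc0 : 0 < c := hc.lt_of_ne' fun h0 => hw0 (by rw [h0, zero_smul])
  rwa [NormedSpace.normalize_smul_of_pos hc0,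
    NormedSpace.normalize_eq_self_of_norm_eq_one (norm_eq_one_of_mem_dirSet ha)]

lemma dirSet_LDir (A : Set E) : dirSet (LDir A 0) 0 = dirSet A 0 := by
  ext a
  constructor
  · intro ha
    obtain ⟨-, x, hx, -, hxa⟩ := mem_dirSet_zero_iff.1 ha
    exact (isClosed_dirSet_zero A).mem_of_tendsto hxa
      (Eventually.of_forall fun i => normalize_mem_dirSet_of_mem_LDir (hx i).1 (hx i).2)
  · intro ha
    simpa only [NormedSpace.normalize_eq_self_of_norm_eq_one (norm_eq_one_of_mem_dirSet ha)] using
      (rayApproximable_LDir ha).normalize_mem_dirSet (ne_zero_of_mem_dirSet ha)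

end Directions

section Image

variable {F : Type*} [NormedAddCommGroup F] [NormedSpace ℝ F] {h : E → F} {X : Set E}

lemma LipschitzWith.tendsto_inv_smul_apply {K : NNReal} (hK : LipschitzWith K h) {v : E} {L : F}
    (hdh : Tendsto (fun s : ℝ => s⁻¹ • h (s • v)) (𝓝[>] 0) (𝓝 L))
    {ι : Type*} {l : Filter ι} {t : ι → ℝ} (ht : Tendsto t l (𝓝[>] 0)) {b : ι → E}
    (hb : Tendsto (fun i => (t i)⁻¹ • b i) l (𝓝 v)) :
    Tendsto (fun i => (t i)⁻¹ • h (b i)) l (𝓝 L) := by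
  have hbound : ∀ᶠ i in l,
      dist ((t i)⁻¹ • h (t i • v)) ((t i)⁻¹ • h (b i)) ≤ K * dist ((t i)⁻¹ • b i) v := by
    filter_upwards [(tendsto_nhdsWithin_iff.1 ht).2] with i (hti : 0 < t i)
    calc dist ((t i)⁻¹ • h (t i • v)) ((t i)⁻¹ • h (b i))
        = (t i)⁻¹ * dist (h (t i • v)) (h (b i)) := by
          rw [dist_smul₀, Real.norm_of_nonneg (inv_nonneg.2 hti.le)]
      _ ≤ (t i)⁻¹ * (K * dist (t i • v) (t i • (t i)⁻¹ • b i)) := by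
          rw [smul_inv_smul₀ hti.ne']
          gcongr
          exact hK.dist_le_mul _ _
      _ = K * dist ((t i)⁻¹ • b i) v := by
          rw [dist_smul₀, Real.norm_of_nonneg hti.le, dist_comm]
          field_simp
  refine (hdh.comp ht).congr_dist (squeeze_zero' (Eventually.of_forall fun _ => dist_nonneg)
    hbound ?_)
  simpa using (hb.dist (tendsto_const_nhds (x := v))).const_mul (K : ℝ)

lemma AntilipschitzWith.norm_le_mul_norm_of_tendsto_inv_smul {K' : NNReal}
    (hK' : AntilipschitzWith K' h) (hh0 : h 0 = 0) {v : E} {L : F}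
    (hdh : Tendsto (fun s : ℝ => s⁻¹ • h (s • v)) (𝓝[>] 0) (𝓝 L)) : ‖v‖ ≤ K' * ‖L‖ := by
  refine ge_of_tendsto (hdh.norm.const_mul _) (eventually_nhdsWithin_of_forall fun s hs => ?_)
  have hs : (0 : ℝ) < s := hs
  have hle := hK'.le_mul_dist (s • v) 0
  rw [dist_zero_right, hh0, dist_zero_right, norm_smul, Real.norm_of_nonneg hs.le] at hle
  rw [norm_smul, Real.norm_of_nonneg (inv_nonneg.2 hs.le), mul_left_comm, ← div_eq_inv_mul,
    le_div_iff₀ hs]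
  linarith

lemma AntilipschitzWith.ne_zero_of_tendsto_inv_smul {K' : NNReal} (hK' : AntilipschitzWith K' h)
    (hh0 : h 0 = 0) {v : E} (hv : v ≠ 0) {L : F}
    (hdh : Tendsto (fun s : ℝ => s⁻¹ • h (s • v)) (𝓝[>] 0) (𝓝 L)) : L ≠ 0 := by
  rintro rfl
  have hle := hK'.norm_le_mul_norm_of_tendsto_inv_smul hh0 hdh
  rw [norm_zero, mul_zero] at hle
  exact hv (norm_le_zero_iff.1 hle)

variable {K K' : NNReal} {dh : E → F}

lemma LDir_image_subset [ProperSpace E] (hK : LipschitzWith K h)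
    (hK' : AntilipschitzWith K' h) (hh0 : h 0 = 0)
    (hdh : ∀ v ∈ dirSet X 0, Tendsto (fun s : ℝ => s⁻¹ • h (s • v)) (𝓝[>] 0) (𝓝 (dh v))) :
    LDir (h '' X) 0 ⊆ {w | ∃ v ∈ dirSet X 0, ∃ s : ℝ, 0 ≤ s ∧ w = s • dh v} := by
  rintro w ⟨a, ha, c, hc, rfl⟩
  obtain ⟨-, y, hy, hy0, hya⟩ := mem_dirSet_zero_iff.1 ha
  choose x hxX hxy using fun i => (hy i).1
  have hx0 : ∀ i, x i ≠ 0 := fun i h0 => (hy i).2 (by rw [← hxy i, h0, hh0])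
  have hxlim : Tendsto x atTop (𝓝 0) := by
    refine squeeze_zero_norm (fun i => ?_) (by simpa using hy0.norm.const_mul (K' : ℝ))
    simpa only [dist_zero_right, hh0, hxy] using hK'.le_mul_dist (x i) 0
  obtain ⟨v, hv, φ, hφ, hxv⟩ :=
    exists_mem_dirSet_tendsto_normalize_subseq (fun i => ⟨hxX i, hx0 i⟩) hxlim
  have ht : Tendsto (fun m => ‖x (φ m)‖) atTop (𝓝[>] 0) :=
    tendsto_nhdsWithin_iff.2 ⟨(hxlim.comp hφ.tendsto_atTop).norm.trans (by rw [norm_zero]),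
      Eventually.of_forall fun m => norm_pos_iff.2 (hx0 (φ m))⟩
  have hdir := tendsto_normalize_of_tendsto_inv_smul (tendsto_nhdsWithin_iff.1 ht).2
    (hK'.ne_zero_of_tendsto_inv_smul hh0 (ne_zero_of_mem_dirSet hv) (hdh v hv))
    (hK.tendsto_inv_smul_apply (hdh v hv) ht hxv)
  have ha : a = NormedSpace.normalize (dh v) := by
    refine tendsto_nhds_unique (hya.comp hφ.tendsto_atTop) ?_
    simpa only [Function.comp_def, ← hxy] using hdir
  refine ⟨v, hv, c * ‖dh v‖⁻¹, by positivity, ?_⟩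
  rw [ha, mul_smul, NormedSpace.normalize]

lemma subset_LDir_image (hK : LipschitzWith K h)
    (hK' : AntilipschitzWith K' h) (hh0 : h 0 = 0)
    (hdh : ∀ v ∈ dirSet X 0, Tendsto (fun s : ℝ => s⁻¹ • h (s • v)) (𝓝[>] 0) (𝓝 (dh v)))
    (happrox : ∀ v ∈ dirSet X 0, RayApproximable X v) :
    {w | ∃ v ∈ dirSet X 0, ∃ s : ℝ, 0 ≤ s ∧ w = s • dh v} ⊆ LDir (h '' X) 0 := by
  rintro w ⟨v, hv, s, hs, rfl⟩
  obtain ⟨t, ht, b, hbX, hb⟩ := happrox v hv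
  have himage : RayApproximable (h '' X) (dh v) :=
    ⟨t, ht, h ∘ b, fun m => mem_image_of_mem h (hbX m),
      hK.tendsto_inv_smul_apply (hdh v hv) ht hb⟩
  have hdhv := hK'.ne_zero_of_tendsto_inv_smul hh0 (ne_zero_of_mem_dirSet hv) (hdh v hv)
  refine ⟨_, himage.normalize_mem_dirSet hdhv, s * ‖dh v‖, by positivity, ?_⟩
  rw [mul_smul, NormedSpace.norm_smul_normalize]

lemma LDir_image_eq [ProperSpace E] (hK : LipschitzWith K h)
    (hK' : AntilipschitzWith K' h) (hh0 : h 0 = 0)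
    (hdh : ∀ v ∈ dirSet X 0, Tendsto (fun s : ℝ => s⁻¹ • h (s • v)) (𝓝[>] 0) (𝓝 (dh v)))
    (happrox : ∀ v ∈ dirSet X 0, RayApproximable X v) :
    LDir (h '' X) 0 = {w | ∃ v ∈ dirSet X 0, ∃ s : ℝ, 0 ≤ s ∧ w = s • dh v} :=
  (LDir_image_subset hK hK' hh0 hdh).antisymm (subset_LDir_image hK hK' hh0 hdh happrox)

end Image

theorem stmt6_general {n : ℕ} (A : Set (EuclideanSpace ℝ (Fin n)))
    (h : EuclideanSpace ℝ (Fin n) → EuclideanSpace ℝ (Fin n))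
    (hh : IsBiLipschitz h) (hh0 : h 0 = 0)
    (dh : EuclideanSpace ℝ (Fin n) → EuclideanSpace ℝ (Fin n))
    (hdh : ∀ v ∈ dirSet A 0,
      Tendsto (fun t : ℝ => t⁻¹ • h (t • v)) (𝓝[>] (0 : ℝ)) (𝓝 (dh v)))
    (hssp : SSP A 0) :
    LDir (h '' A) 0 = LDir (h '' LDir A 0) 0 ∧
    LDir (h '' A) 0 = {w | ∃ v ∈ dirSet A 0, ∃ s : ℝ, 0 ≤ s ∧ w = s • dh v} := by
  obtain ⟨-, K, K', hK, hK'⟩ := hh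
  have hA := LDir_image_eq hK hK' hh0 hdh fun v hv => hssp.rayApproximable hv
  have hLA := LDir_image_eq (X := LDir A 0) hK hK' hh0 (dirSet_LDir A ▸ hdh)
    fun v hv => rayApproximable_LDir (dirSet_LDir A ▸ hv)
  rw [dirSet_LDir] at hLA
  exact ⟨hA.trans hLA.symm, hA⟩

theorem stmt6 {n : ℕ} (A : Set (EuclideanSpace ℝ (Fin n)))
    (h0 : (0 : EuclideanSpace ℝ (Fin n)) ∈ closure A)
    (h : EuclideanSpace ℝ (Fin n) → EuclideanSpace ℝ (Fin n))
    (hh : IsBiLipschitz h) (hh0 : h 0 = 0)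
    (dh : EuclideanSpace ℝ (Fin n) → EuclideanSpace ℝ (Fin n))
    (hdh : ∀ v ∈ dirSet A 0,
      Tendsto (fun t : ℝ => t⁻¹ • h (t • v)) (𝓝[>] (0 : ℝ)) (𝓝 (dh v)))
    (hssp : SSP A 0) :
    LDir (h '' A) 0 = LDir (h '' LDir A 0) 0 ∧
    LDir (h '' A) 0 = {w | ∃ v ∈ dirSet A 0, ∃ s : ℝ, 0 ≤ s ∧ w = s • dh v} :=
  stmt6_general A h hh hh0 dh hdh hssp
end

section
/- Let A ⊆ ℝⁿ, let p ∈ closure(A), and let h : ℝⁿ → ℝⁿ be a bi-Lipschitz homeomorphism. Assume that A satisfies condition (SSP) at p. Then h(A) satisfies condition (SSP) at h(p) if and only if h(p + LD_p(A)) satisfies condition (SSP) at h(p), where p + LD_p(A) := {p + w : w ∈ LD_p(A)} is the geometric tangent cone of A at p. -/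
/-!
Say that `Y` approximates `X` at `p` if every sequence `x` of `X \ {p}` tending to `p` is shadowed
by a sequence `y` of `Y` with `y - p ~ x - p`, i.e. `‖x_m - y_m‖ = o(‖x_m - p‖)`. Such
approximations are transported by bi-Lipschitz maps and enlarge direction sets, and in asymptotic
form (SSP) asks for such a shadow of every sequence approaching `p` along a direction of the set;
hence if `X` and `Y` approximate each other at `p`, (SSP) passes from `Y` to `X`. By compactness of
the unit ball, `A` is approximated at `p` by its geometric tangent cone `p + LD_p(A)`, and since
`D_p(A)` is closed, (SSP) for `A` says that conversely the cone is approximated by `A`.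
-/

open Filter Topology Set Asymptotics

variable {E : Type*} [NormedAddCommGroup E] [NormedSpace ℝ E]

open Metric
open NormedSpace (normalize)

theorem norm_mul_norm_normalize_sub_le (u v : E) :
    ‖v‖ * ‖normalize u - normalize v‖ ≤ 2 * ‖u - v‖ := by
  have hu : ‖normalize u‖ ≤ 1 := mem_closedBall_zero_iff.1 (inv_norm_smul_mem_unitClosedBall u)
  calc ‖v‖ * ‖normalize u - normalize v‖ = ‖(‖v‖ - ‖u‖) • normalize u + (u - v)‖ := by
        rw [← norm_norm v, ← norm_smul, norm_norm, smul_sub, sub_smul,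
          NormedSpace.norm_smul_normalize, NormedSpace.norm_smul_normalize]
        abel_nf
    _ ≤ |‖v‖ - ‖u‖| * 1 + ‖u - v‖ := by
        refine (norm_add_le _ _).trans ?_
        rw [norm_smul, Real.norm_eq_abs]
        gcongr
    _ ≤ 2 * ‖u - v‖ := by
        have := abs_norm_sub_norm_le v u
        rw [norm_sub_rev] at this
        linarith

section Asymptotic

variable {α F : Type*} [NormedAddCommGroup F] {l : Filter α}

theorem tendsto_norm_sub_div_of_isEquivalent {a b : α → F} {p : F}
    (h : (fun m => b m - p) ~[l] (fun m => a m - p)) :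
    Tendsto (fun m => ‖a m - b m‖ / ‖a m - p‖) l (𝓝 0) := by
  have := h.isLittleO.norm_norm.tendsto_div_nhds_zero
  simpa only [Pi.sub_apply, sub_sub_sub_cancel_right, norm_sub_rev (b _)] using this

theorem isEquivalent_sub_iff {a b : α → F} {p : F} (ha : ∀ᶠ m in l, a m ≠ p) :
    (fun m => b m - p) ~[l] (fun m => a m - p) ↔
      Tendsto (fun m => ‖a m - b m‖ / ‖a m - p‖) l (𝓝 0) := by
  refine ⟨tendsto_norm_sub_div_of_isEquivalent, fun h => ?_⟩
  rw [IsEquivalent, ← isLittleO_norm_norm, isLittleO_iff_tendsto' (ha.mono fun m hm h0 =>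
    absurd (norm_eq_zero.1 h0) (sub_ne_zero.2 hm))]
  simpa only [Pi.sub_apply, sub_sub_sub_cancel_right, norm_sub_rev (b _)] using h

theorem tendsto_of_isEquivalent_sub {x y : α → F} {p : F}
    (h : (fun m => y m - p) ~[l] (fun m => x m - p)) (hx : Tendsto x l (𝓝 p)) :
    Tendsto y l (𝓝 p) :=
  tendsto_sub_nhds_zero_iff.1 (h.isBigO.trans_tendsto (tendsto_sub_nhds_zero_iff.2 hx))

theorem eventually_ne_of_isEquivalent_sub {x y : α → F} {p : F}
    (h : (fun m => y m - p) ~[l] (fun m => x m - p)) (hx : ∀ᶠ m in l, x m ≠ p) :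
    ∀ᶠ m in l, y m ≠ p := by
  filter_upwards [h.isBigO_symm.eq_zero_imp, hx] with m hm hxm hym
  exact hxm (sub_eq_zero.1 (hm (sub_eq_zero.2 hym)))

theorem Asymptotics.IsEquivalent.tendsto_normalize {u v : α → E} {d : E} (h : u ~[l] v)
    (hv : Tendsto (fun x => normalize (v x)) l (𝓝 d)) :
    Tendsto (fun x => normalize (u x)) l (𝓝 d) := by
  have hdiff : Tendsto (fun x => ‖normalize (u x) - normalize (v x)‖) l (𝓝 0) := by
    have hratio := h.isLittleO.norm_norm.tendsto_div_nhds_zero.const_mul 2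
    rw [mul_zero] at hratio
    refine squeeze_zero' (Eventually.of_forall fun x => norm_nonneg _) ?_ hratio
    filter_upwards [h.isBigO.eq_zero_imp] with x hx
    by_cases hv0 : v x = 0
    · simp [hv0, hx hv0]
    · rw [mul_div_assoc', le_div_iff₀ (norm_pos_iff.2 hv0), mul_comm]
      exact norm_mul_norm_normalize_sub_le _ _
  simpa using (tendsto_zero_iff_norm_tendsto_zero.2 hdiff).add hv

theorem isEquivalent_norm_smul_of_tendsto_normalize {v : α → E} {d : E}
    (hd : Tendsto (fun x => normalize (v x)) l (𝓝 d)) :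
    (fun x => ‖v x‖ • d) ~[l] v := by
  refine IsLittleO.of_bound fun c hc => ?_
  filter_upwards [(tendsto_iff_norm_sub_tendsto_zero.1 hd).eventually_le_const hc] with x hx
  calc ‖‖v x‖ • d - v x‖ = ‖v x‖ * ‖normalize (v x) - d‖ := by
        rw [← norm_norm (v x), ← norm_smul, norm_norm, smul_sub, NormedSpace.norm_smul_normalize,
          norm_sub_rev]
    _ ≤ c * ‖v x‖ := by rw [mul_comm]; exact mul_le_mul_of_nonneg_right hx (norm_nonneg _)

end Asymptotic

theorem dirSet_eq_preimage_closure (A : Set E) (p : E) :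
    dirSet A p = (fun d => (p, d)) ⁻¹'
      closure {q : E × E | q.1 ∈ A \ {p} ∧ q.2 = normalize (q.1 - p)} := by
  ext d
  simp only [mem_preimage, mem_closure_iff_seq_limit]
  constructor
  · rintro ⟨-, x, hx, hxp, hxd⟩
    exact ⟨fun i => (x i, normalize (x i - p)), fun i => ⟨hx i, rfl⟩, hxp.prodMk_nhds hxd⟩
  · rintro ⟨q, hq, hqd⟩
    have hd : Tendsto (fun i => normalize ((q i).1 - p)) atTop (𝓝 d) :=
      ((continuous_snd.tendsto _).comp hqd).congr fun i => (hq i).2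
    have hunit : ∀ i, ‖normalize ((q i).1 - p)‖ = 1 := fun i =>
      NormedSpace.norm_normalize (sub_ne_zero.2 (hq i).1.2)
    refine ⟨tendsto_nhds_unique (hd.norm.congr hunit) tendsto_const_nhds, fun i => (q i).1,
      fun i => (hq i).1, (continuous_fst.tendsto _).comp hqd, hd⟩

theorem isClosed_dirSet (A : Set E) (p : E) : IsClosed (dirSet A p) := by
  rw [dirSet_eq_preimage_closure]
  exact isClosed_closure.preimage (by fun_prop)

theorem mem_dirSet_of_tendsto {A : Set E} {p d : E} {x : ℕ → E}
    (hx : ∀ᶠ m in atTop, x m ∈ A ∧ x m ≠ p) (hxp : Tendsto x atTop (𝓝 p))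
    (hd : Tendsto (fun m => normalize (x m - p)) atTop (𝓝 d)) : d ∈ dirSet A p := by
  rw [dirSet_eq_preimage_closure]
  exact mem_closure_of_tendsto (hxp.prodMk_nhds hd) (hx.mono fun m hm => ⟨hm, rfl⟩)

def geomTangentCone (A : Set E) (p : E) : Set E :=
  {x | ∃ w ∈ LDir A p, x = p + w}

theorem normalize_sub_mem_dirSet {A : Set E} {p x : E} (hx : x ∈ geomTangentCone A p)
    (hxp : x ≠ p) : normalize (x - p) ∈ dirSet A p := by
  obtain ⟨_, ⟨a, ha, t, ht, rfl⟩, rfl⟩ := hx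
  have ht0 : 0 < t := ht.lt_of_ne <| by rintro rfl; simp at hxp
  rwa [add_sub_cancel_left, NormedSpace.normalize_smul_of_pos ht0,
    NormedSpace.normalize_eq_self_of_norm_eq_one ha.1]

theorem ssp_iff {A : Set E} {p : E} :
    SSP A p ↔ ∀ a : ℕ → E, (∀ m, a m ≠ p) → Tendsto a atTop (𝓝 p) →
      (∃ d ∈ dirSet A p, Tendsto (fun m => normalize (a m - p)) atTop (𝓝 d)) →
      ∃ b : ℕ → E, (∀ m, b m ∈ A) ∧ (fun m => b m - p) ~[atTop] (fun m => a m - p) := by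
  refine forall_congr' fun a => forall_congr' fun ha => forall_congr' fun _ =>
    forall_congr' fun _ => exists_congr fun b => and_congr_right fun _ => ?_
  rw [isEquivalent_sub_iff (Eventually.of_forall ha)]
  refine ⟨And.left, fun h => ⟨h, ?_⟩⟩
  have := tendsto_norm_sub_div_of_isEquivalent ((isEquivalent_sub_iff
    (Eventually.of_forall ha)).2 h).symm
  simpa only [norm_sub_rev (b _)] using this

section RelApprox

variable {F G : Type*} [NormedAddCommGroup F] [NormedAddCommGroup G]

def RelApproxAt (X Y : Set F) (p : F) : Prop :=
  ∀ x : ℕ → F, (∀ᶠ m in atTop, x m ∈ X ∧ x m ≠ p) → Tendsto x atTop (𝓝 p) →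
    ∃ y : ℕ → F, (∀ m, y m ∈ Y) ∧ (fun m => y m - p) ~[atTop] (fun m => x m - p)

theorem exists_tendsto_norm_sub_div_of_infDist {Y : Set F} (hY : Y.Nonempty) {x : ℕ → F}
    {r : ℕ → ℝ} (hr : ∀ᶠ m in atTop, 0 < r m)
    (h : Tendsto (fun m => infDist (x m) Y / r m) atTop (𝓝 0)) :
    ∃ y : ℕ → F, (∀ m, y m ∈ Y) ∧ Tendsto (fun m => ‖x m - y m‖ / r m) atTop (𝓝 0) := by
  have hnear : ∀ m : ℕ, ∃ y ∈ Y, 0 < r m → dist (x m) y < infDist (x m) Y + r m / (m + 1) := by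
    intro m
    by_cases hm : 0 < r m
    · obtain ⟨y, hy, hxy⟩ := (infDist_lt_iff hY).1 (lt_add_of_pos_right (infDist (x m) Y)
        (by positivity : 0 < r m / (m + 1)))
      exact ⟨y, hy, fun _ => hxy⟩
    · exact ⟨hY.some, hY.some_mem, fun h => absurd h hm⟩
  choose y hyY hy using hnear
  refine ⟨y, hyY, squeeze_zero' (hr.mono fun m hm => div_nonneg (norm_nonneg _) hm.le) ?_
    (by simpa using h.add tendsto_one_div_add_atTop_nhds_zero_nat)⟩
  filter_upwards [hr] with m hm
  rw [div_le_iff₀ hm, add_mul, div_mul_cancel₀ _ hm.ne', ← div_eq_inv_mul, ← dist_eq_norm]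
  exact (hy m hm).le

theorem relApproxAt_of_subseq {X Y : Set F} {p : F}
    (h : ∀ x : ℕ → F, (∀ m, x m ∈ X ∧ x m ≠ p) → Tendsto x atTop (𝓝 p) →
      ∃ φ : ℕ → ℕ, StrictMono φ ∧ ∃ y : ℕ → F, (∀ k, y k ∈ Y) ∧
        (fun k => y k - p) ~[atTop] (fun k => x (φ k) - p)) :
    RelApproxAt X Y p := by
  intro x hx hxp
  have hsub : ∀ ns : ℕ → ℕ, Tendsto ns atTop atTop → ∃ φ : ℕ → ℕ, Tendsto φ atTop atTop ∧
      ∃ y : ℕ → F, (∀ k, y k ∈ Y) ∧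
        Tendsto (fun k => ‖x (ns (φ k)) - y k‖ / ‖x (ns (φ k)) - p‖) atTop (𝓝 0) := by
    intro ns hns
    obtain ⟨N, hN⟩ := eventually_atTop.1 (hns.eventually hx)
    obtain ⟨φ, hφ, y, hyY, hy⟩ := h (fun k => x (ns (k + N))) (fun k => hN _ (Nat.le_add_left N k))
      (hxp.comp (hns.comp (tendsto_add_atTop_nat N)))
    exact ⟨fun k => φ k + N, (tendsto_add_atTop_nat N).comp hφ.tendsto_atTop, y, hyY,
      tendsto_norm_sub_div_of_isEquivalent hy⟩
  obtain ⟨-, -, y₀, hy₀Y, -⟩ := hsub id tendsto_id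
  have hinf : Tendsto (fun m => infDist (x m) Y / ‖x m - p‖) atTop (𝓝 0) := by
    refine tendsto_of_subseq_tendsto fun ns hns => ?_
    obtain ⟨φ, -, y, hyY, hy⟩ := hsub ns hns
    refine ⟨φ, squeeze_zero (fun k => div_nonneg infDist_nonneg (norm_nonneg _)) (fun k => ?_) hy⟩
    gcongr
    exact (infDist_le_dist_of_mem (hyY k)).trans_eq (dist_eq_norm _ _)
  obtain ⟨y, hyY, hy⟩ := exists_tendsto_norm_sub_div_of_infDist ⟨y₀ 0, hy₀Y 0⟩
    (hx.mono fun m hm => norm_pos_iff.2 (sub_ne_zero.2 hm.2)) hinf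
  exact ⟨y, hyY, (isEquivalent_sub_iff (hx.mono fun m hm => hm.2)).2 hy⟩

theorem RelApproxAt.image {X Y : Set F} {p : F} {h : F → G} {K K' : NNReal}
    (hK : LipschitzWith K h) (hK' : AntilipschitzWith K' h) (hXY : RelApproxAt X Y p) :
    RelApproxAt (h '' X) (h '' Y) (h p) := by
  intro ξ hξ hξp
  set z := fun m => Function.invFunOn h X (ξ m)
  have hz : ∀ᶠ m in atTop, (z m ∈ X ∧ z m ≠ p) ∧ h (z m) = ξ m := by
    filter_upwards [hξ] with m hm
    have hzξ : h (z m) = ξ m := Function.invFunOn_eq hm.1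
    exact ⟨⟨Function.invFunOn_mem hm.1, fun hzp => hm.2 (by rw [← hzξ, hzp])⟩, hzξ⟩
  have hzξ : (fun m => z m - p) =O[atTop] (fun m => ξ m - h p) :=
    IsBigO.of_bound K' <| hz.mono fun m hm => by
      rw [← hm.2, ← dist_eq_norm, ← dist_eq_norm]
      exact hK'.le_mul_dist _ _
  have hzp : Tendsto z atTop (𝓝 p) :=
    tendsto_sub_nhds_zero_iff.1 (hzξ.trans_tendsto (tendsto_sub_nhds_zero_iff.2 hξp))
  obtain ⟨y, hyY, hyz⟩ := hXY z (hz.mono fun m hm => hm.1) hzp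
  have hLip : (fun m => h (y m) - h (z m)) =O[atTop] (fun m => y m - z m) :=
    IsBigO.of_bound K <| Eventually.of_forall fun m => by
      rw [← dist_eq_norm, ← dist_eq_norm]
      exact hK.dist_le_mul _ _
  refine ⟨fun m => h (y m), fun m => mem_image_of_mem h (hyY m), ?_⟩
  have hyz' : (fun m => y m - z m) =o[atTop] (fun m => z m - p) :=
    hyz.isLittleO.congr_left fun m => sub_sub_sub_cancel_right _ _ _
  refine (hLip.trans_isLittleO (hyz'.trans_isBigO hzξ)).congr' ?_ EventuallyEq.rfl
  filter_upwards [hz] with m hm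
  simp only [Pi.sub_apply, sub_sub_sub_cancel_right, hm.2]

end RelApprox

theorem RelApproxAt.dirSet_subset {X Y : Set E} {p : E} (h : RelApproxAt X Y p) :
    dirSet X p ⊆ dirSet Y p := by
  rintro d ⟨-, x, hx, hxp, hxd⟩
  obtain ⟨y, hyY, hyx⟩ := h x (Eventually.of_forall hx) hxp
  have hyp := eventually_ne_of_isEquivalent_sub hyx (Eventually.of_forall fun m => (hx m).2)
  exact mem_dirSet_of_tendsto (hyp.mono fun m hm => ⟨hyY m, hm⟩)
    (tendsto_of_isEquivalent_sub hyx hxp) (hyx.tendsto_normalize hxd)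

theorem RelApproxAt.ssp {X Y : Set E} {p : E} (hXY : RelApproxAt X Y p)
    (hYX : RelApproxAt Y X p) (hY : SSP Y p) : SSP X p := by
  rw [ssp_iff] at hY ⊢
  rintro a ha hap ⟨d, hd, had⟩
  obtain ⟨c, hcY, hca⟩ := hY a ha hap ⟨d, hXY.dirSet_subset hd, had⟩
  have hcp := eventually_ne_of_isEquivalent_sub hca (Eventually.of_forall ha)
  obtain ⟨b, hbX, hbc⟩ := hYX c (hcp.mono fun m hm => ⟨hcY m, hm⟩)
    (tendsto_of_isEquivalent_sub hca hap)
  exact ⟨b, hbX, hbc.trans hca⟩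

theorem relApproxAt_geomTangentCone [ProperSpace E] (A : Set E) (p : E) :
    RelApproxAt A (geomTangentCone A p) p := by
  refine relApproxAt_of_subseq fun x hx hxp => ?_
  obtain ⟨d, -, φ, hφ, hd⟩ := (isCompact_closedBall (0 : E) 1).tendsto_subseq
    fun m => inv_norm_smul_mem_unitClosedBall (x m - p)
  have hdA : d ∈ dirSet A p := mem_dirSet_of_tendsto (Eventually.of_forall fun k => hx (φ k))
    (hxp.comp hφ.tendsto_atTop) hd
  refine ⟨φ, hφ, fun k => p + ‖x (φ k) - p‖ • d,
    fun k => ⟨_, ⟨d, hdA, _, norm_nonneg _, rfl⟩, rfl⟩, ?_⟩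
  simpa only [add_sub_cancel_left] using isEquivalent_norm_smul_of_tendsto_normalize hd

theorem SSP.relApproxAt_geomTangentCone [ProperSpace E] {A : Set E} {p : E} (hA : SSP A p) :
    RelApproxAt (geomTangentCone A p) A p := by
  refine relApproxAt_of_subseq fun x hx hxp => ?_
  obtain ⟨d, -, φ, hφ, hd⟩ := (isCompact_closedBall (0 : E) 1).tendsto_subseq
    fun m => inv_norm_smul_mem_unitClosedBall (x m - p)
  have hdA : d ∈ dirSet A p := (isClosed_dirSet A p).mem_of_tendsto hd
    (Eventually.of_forall fun k => normalize_sub_mem_dirSet (hx (φ k)).1 (hx (φ k)).2)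
  obtain ⟨b, hbA, hb⟩ := ssp_iff.1 hA (fun k => x (φ k)) (fun k => (hx (φ k)).2)
    (hxp.comp hφ.tendsto_atTop) ⟨d, hdA, hd⟩
  exact ⟨φ, hφ, b, hbA, hb⟩

theorem stmt7_general {n : ℕ} (A : Set (EuclideanSpace ℝ (Fin n)))
    (p : EuclideanSpace ℝ (Fin n))
    (h : EuclideanSpace ℝ (Fin n) → EuclideanSpace ℝ (Fin n))
    (hh : IsBiLipschitz h) (hssp : SSP A p) :
    SSP (h '' A) (h p) ↔
      SSP (h '' {x | ∃ w ∈ LDir A p, x = p + w}) (h p) := by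
  obtain ⟨-, K, K', hK, hK'⟩ := hh
  have hAC := (relApproxAt_geomTangentCone A p).image hK hK'
  have hCA := hssp.relApproxAt_geomTangentCone.image hK hK'
  exact ⟨hCA.ssp hAC, hAC.ssp hCA⟩

theorem stmt7 {n : ℕ} (A : Set (EuclideanSpace ℝ (Fin n)))
    (p : EuclideanSpace ℝ (Fin n)) (hp : p ∈ closure A)
    (h : EuclideanSpace ℝ (Fin n) → EuclideanSpace ℝ (Fin n))
    (hh : IsBiLipschitz h) (hssp : SSP A p) :
    SSP (h '' A) (h p) ↔
      SSP (h '' {x | ∃ w ∈ LDir A p, x = p + w}) (h p) :=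
  stmt7_general A p h hh hssp
end

section
/- Let A ⊆ ℝⁿ be a nonempty open set, let h : A → ℝ^m be a bi-Lipschitz map (h is injective, Lipschitz, and its inverse h⁻¹ : h(A) → A is Lipschitz), and let τ : ℝ^m → ℝ^k be a map whose restriction to h(A) is Lipschitz. Then there exists a set B ⊆ A with Lebesgue-null complement A \ B such that for every x₀ ∈ B the restriction of τ to h(A) is differentiable at h(x₀): there is a linear map P : ℝ^m → ℝ^k with τ(y) − τ(h(x₀)) − P(y − h(x₀)) = o(‖y − h(x₀)‖) as y → h(x₀) with y ∈ h(A). -/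
open Filter Topology Set Asymptotics

variable {E : Type*} [NormedAddCommGroup E] [NormedSpace ℝ E]

/-!
At almost every point of `A` both `h` and `τ ∘ h` are differentiable (Rademacher).
At such a point `x₀` the lower bound `‖x - x₀‖ ≤ K' ‖h x - h x₀‖` makes `Dh` injective,
so it has a continuous left inverse `L`, and `P := D(τ ∘ h) ∘ L` satisfies `P ∘ Dh = D(τ ∘ h)`.
Both first-order errors are `o(x - x₀) = o(h x - h x₀)`, which is the claim along `h`;
the same lower bound shows that approaching `h x₀` inside `h '' A` forces `x → x₀`.
-/

open MeasureTheory

theorem nhdsWithin_image_le_map_nhds {α β : Type*} [PseudoMetricSpace α] [PseudoMetricSpace β]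
    {f : α → β} {s : Set α} {x₀ : α} {C : ℝ}
    (hf : ∀ x ∈ s, dist x x₀ ≤ C * dist (f x) (f x₀)) :
    𝓝[f '' s] (f x₀) ≤ map f (𝓝 x₀) := by
  have hpull : Tendsto id (comap f (𝓝 (f x₀)) ⊓ 𝓟 s) (𝓝 x₀) := by
    have hfx : Tendsto (fun x => C * dist (f x) (f x₀)) (comap f (𝓝 (f x₀)) ⊓ 𝓟 s) (𝓝 0) := by
      have := ((tendsto_comap (f := f) (x := 𝓝 (f x₀))).dist
        (tendsto_const_nhds (x := f x₀))).const_mul C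
      simpa using this.mono_left inf_le_left
    exact tendsto_iff_dist_tendsto_zero.2
      (squeeze_zero' (.of_forall fun _ => dist_nonneg) (mem_inf_of_right hf) hfx)
  intro S hS
  obtain ⟨U, hU, hUS⟩ := mem_comap.1 (mem_inf_principal.1 (hpull hS))
  refine mem_inf_principal.2 (mem_of_superset hU ?_)
  rintro _ hy ⟨x, hx, rfl⟩
  exact hUS hy hx

section

variable {F G : Type*} [NormedAddCommGroup F] [NormedSpace ℝ F]
  [NormedAddCommGroup G] [NormedSpace ℝ G]

theorem HasFDerivAt.norm_le_mul_norm_apply {f : E → F} {f' : E →L[ℝ] F} {x : E} {C : ℝ}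
    (hf : HasFDerivAt f f' x) (hC : ∀ᶠ y in 𝓝 x, ‖y - x‖ ≤ C * ‖f y - f x‖) (v : E) :
    ‖v‖ ≤ C * ‖f' v‖ := by
  have hline : Tendsto (fun c : ℝ => x + c⁻¹ • v) atTop (𝓝 x) := by
    simpa using ((tendsto_inv_atTop_zero (𝕜 := ℝ)).smul_const v).const_add x
  refine ge_of_tendsto ((hf.lim_real v).norm.const_mul C) ?_
  filter_upwards [hline.eventually hC, eventually_gt_atTop 0] with c hc hpos
  rw [add_sub_cancel_left, norm_smul, Real.norm_of_nonneg (inv_nonneg.2 hpos.le)] at hc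
  rw [norm_smul, Real.norm_of_nonneg hpos.le]
  calc ‖v‖ = c * (c⁻¹ * ‖v‖) := by field_simp
    _ ≤ c * (C * ‖f (x + c⁻¹ • v) - f x‖) := by gcongr
    _ = C * (c * ‖f (x + c⁻¹ • v) - f x‖) := by ring

theorem HasFDerivAt.injective_of_isBigO_sub {f : E → F} {f' : E →L[ℝ] F} {x : E}
    (hf : HasFDerivAt f f' x) (hO : (fun y => y - x) =O[𝓝 x] fun y => f y - f x) :
    Function.Injective f' := by
  obtain ⟨C, hC⟩ := hO.bound
  refine (injective_iff_map_eq_zero f').2 fun v hv => norm_le_zero_iff.1 ?_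
  simpa [hv] using hf.norm_le_mul_norm_apply hC v

theorem exists_isLittleO_map_of_hasFDerivAt_comp [FiniteDimensional ℝ F]
    {h : E → F} {τ : F → G} {Dh : E →L[ℝ] F} {Dg : E →L[ℝ] G} {x₀ : E}
    (hh : HasFDerivAt h Dh x₀) (hg : HasFDerivAt (τ ∘ h) Dg x₀)
    (hO : (fun x => x - x₀) =O[𝓝 x₀] fun x => h x - h x₀) :
    ∃ P : F →L[ℝ] G,
      (fun y => τ y - τ (h x₀) - P (y - h x₀)) =o[map h (𝓝 x₀)] fun y => y - h x₀ := by
  have hL := ContinuousLinearMap.HasLeftInverse.of_injective_of_finiteDimensional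
    (hh.injective_of_isBigO_sub hO)
  refine ⟨Dg.comp hL.leftInverse, ?_⟩
  have hP : ∀ w, Dg (hL.leftInverse (Dh w)) = Dg w := fun w => by
    rw [hL.leftInverse_leftInverse w]
  rw [isLittleO_map]
  refine IsLittleO.trans_isBigO ?_ hO
  refine (hg.isLittleO.sub ((Dg.comp hL.leftInverse).isBigO_comp _ _ |>.trans_isLittleO
    hh.isLittleO)).congr_left fun x => ?_
  simp only [Function.comp_apply, ContinuousLinearMap.comp_apply, map_sub, hP]
  abel

theorem LipschitzOnWith.ae_differentiableAt_of_mem_of_isOpen [FiniteDimensional ℝ E]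
    [MeasurableSpace E] [BorelSpace E] [FiniteDimensional ℝ F] {μ : Measure E}
    [μ.IsAddHaarMeasure] {C : NNReal} {f : E → F} {s : Set E}
    (hf : LipschitzOnWith C f s) (hs : IsOpen s) :
    ∀ᵐ x ∂μ, x ∈ s → DifferentiableAt ℝ f x := by
  filter_upwards [hf.ae_differentiableWithinAt_of_mem] with x hx xs
  exact (hx xs).differentiableAt (hs.mem_nhds xs)

end

theorem stmt8_general {n m k : ℕ} (A : Set (EuclideanSpace ℝ (Fin n)))
    (hA : IsOpen A)
    (h : EuclideanSpace ℝ (Fin n) → EuclideanSpace ℝ (Fin m))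
    (K : NNReal) (hlip : LipschitzOnWith K h A)
    (K' : NNReal) (hanti : ∀ x ∈ A, ∀ y ∈ A, ‖x - y‖ ≤ (K' : ℝ) * ‖h x - h y‖)
    (τ : EuclideanSpace ℝ (Fin m) → EuclideanSpace ℝ (Fin k))
    (Kτ : NNReal) (hτ : LipschitzOnWith Kτ τ (h '' A)) :
    ∃ B ⊆ A, MeasureTheory.volume (A \ B) = 0 ∧
      ∀ x₀ ∈ B, ∃ P : EuclideanSpace ℝ (Fin m) →ₗ[ℝ] EuclideanSpace ℝ (Fin k),
        (fun y => τ y - τ (h x₀) - P (y - h x₀))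
          =o[𝓝[h '' A] (h x₀)] fun y => y - h x₀ := by
  have hτh : LipschitzOnWith (Kτ * K) (τ ∘ h) A := hτ.comp hlip (mapsTo_image h A)
  refine ⟨{x ∈ A | DifferentiableAt ℝ h x ∧ DifferentiableAt ℝ (τ ∘ h) x}, sep_subset _ _, ?_, ?_⟩
  · rw [measure_eq_zero_iff_ae_notMem]
    filter_upwards [hlip.ae_differentiableAt_of_mem_of_isOpen hA,
      hτh.ae_differentiableAt_of_mem_of_isOpen hA] with x hh hg ⟨hx, hxB⟩
    exact hxB ⟨hx, hh hx, hg hx⟩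
  · rintro x₀ ⟨hx₀, hh, hg⟩
    have hO : (fun x => x - x₀) =O[𝓝 x₀] fun x => h x - h x₀ :=
      .of_bound K' (eventually_of_mem (hA.mem_nhds hx₀) fun x hx => hanti x hx x₀ hx₀)
    obtain ⟨P, hP⟩ := exists_isLittleO_map_of_hasFDerivAt_comp hh.hasFDerivAt hg.hasFDerivAt hO
    refine ⟨P.toLinearMap, hP.mono (nhdsWithin_image_le_map_nhds (C := K') ?_)⟩
    simpa only [dist_eq_norm] using fun x hx => hanti x hx x₀ hx₀

theorem stmt8 {n m k : ℕ} (A : Set (EuclideanSpace ℝ (Fin n)))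
    (hA : IsOpen A) (hne : A.Nonempty)
    (h : EuclideanSpace ℝ (Fin n) → EuclideanSpace ℝ (Fin m))
    (hinj : Set.InjOn h A)
    (K : NNReal) (hlip : LipschitzOnWith K h A)
    (K' : NNReal) (hanti : ∀ x ∈ A, ∀ y ∈ A, ‖x - y‖ ≤ (K' : ℝ) * ‖h x - h y‖)
    (τ : EuclideanSpace ℝ (Fin m) → EuclideanSpace ℝ (Fin k))
    (Kτ : NNReal) (hτ : LipschitzOnWith Kτ τ (h '' A)) :
    ∃ B ⊆ A, MeasureTheory.volume (A \ B) = 0 ∧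
      ∀ x₀ ∈ B, ∃ P : EuclideanSpace ℝ (Fin m) →ₗ[ℝ] EuclideanSpace ℝ (Fin k),
        (fun y => τ y - τ (h x₀) - P (y - h x₀))
          =o[𝓝[h '' A] (h x₀)] fun y => y - h x₀ :=
  stmt8_general A hA h K hlip K' hanti τ Kτ hτ
end

section
/- Let Q := {(a,b,1) ∈ ℝ³ : max(|a|,|b|) = 1} and let B := {t·q : q ∈ Q, t ≥ 0} be the cone over Q with vertex 0, and let A₁⁺ := {(x,y,z) ∈ ℝ³ : x² + y² = z², z ≥ 0}. Then L𝒢D_0(A₁⁺) = {(x,y,z) ∈ ℝ³ : z² ≤ x² + y²}, while L𝒢D_0(B) = τ₁ ∪ τ₂ ∪ τ₃ ∪ τ₄, where τ₁, τ₂, τ₃, τ₄ are the planes in ℝ³ defined by x − z = 0, y + z = 0, x + z = 0 and y − z = 0 respectively. -/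
/-!
Both sets are cones with vertex `0`, so rescaling turns a direction of the set at a point `q`
into a direction at the points `t • q → 0`. Hence `L𝒢D_0` equals a closed cone `C` as soon as
all directions of the set at all of its points lie in `C` and every unit vector of `C` is a
direction at some point.

`A₁⁺` is the graph of the `1`-Lipschitz function `‖(x, y)‖`, so all its chords satisfy
`z² ≤ x² + y²`. Conversely, a unit vector `a` with `a₂² ≤ a₀² + a₁²` lies in the tangent plane
`a₀ u + a₁ v = a₂` of the cone along some ruling through `(u, v, 1)`, and a curve on the cone
through that point has velocity `a`.

`B` lies in the union of the four planes `τᵢ`, so its directions do as well. Conversely, each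
face of `B` contains a short segment in any direction of its plane, starting at the midpoint of
the face's edge `max(|x|, |y|) = 1`, `z = 1`.
-/

open Filter Topology Set Asymptotics

variable {E : Type*} [NormedAddCommGroup E] [NormedSpace ℝ E]

open scoped Pointwise

def IsCone (C : Set E) : Prop := ∀ v ∈ C, ∀ t : ℝ, 0 ≤ t → t • v ∈ C

section General

variable {A A' C : Set E} {p q a : E}

theorem mem_dirSet_of_tendsto_s15 {ι : Type*} {l : Filter ι} [l.IsCountablyGenerated] {x : ι → E}
    (hA : ∃ᶠ i in l, x i ∈ A ∧ x i ≠ q) (hx : Tendsto x l (𝓝 q))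
    (hdir : Tendsto (fun i => ‖x i - q‖⁻¹ • (x i - q)) l (𝓝 a)) : a ∈ dirSet A q := by
  obtain ⟨φ, hφ, hφA⟩ := exists_seq_forall_of_frequently hA
  have hdirφ := hdir.comp hφ
  refine ⟨tendsto_nhds_unique hdirφ.norm (tendsto_const_nhds.congr fun n => ?_),
    x ∘ φ, hφA, hx.comp hφ, hdirφ⟩
  exact (norm_smul_inv_norm (sub_ne_zero.2 (hφA n).2)).symm

theorem dirSet_mono (h : A ⊆ A') : dirSet A q ⊆ dirSet A' q :=
  fun _ ⟨ha, x, hx, hxq, hdir⟩ => ⟨ha, x, fun i => ⟨h (hx i).1, (hx i).2⟩, hxq, hdir⟩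

theorem dirSet_union : dirSet (A ∪ A') q = dirSet A q ∪ dirSet A' q := by
  refine Subset.antisymm ?_ (union_subset (dirSet_mono subset_union_left)
    (dirSet_mono subset_union_right))
  rintro a ⟨-, x, hx, hxq, hdir⟩
  have hfreq : (∃ᶠ i in atTop, x i ∈ A ∧ x i ≠ q) ∨ ∃ᶠ i in atTop, x i ∈ A' ∧ x i ≠ q := by
    rw [← frequently_or_distrib]
    exact Frequently.of_forall fun i => (hx i).1.imp (⟨·, (hx i).2⟩) (⟨·, (hx i).2⟩)
  exact hfreq.imp (mem_dirSet_of_tendsto_s15 · hxq hdir) (mem_dirSet_of_tendsto_s15 · hxq hdir)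

theorem dirSet_subset_of_sub_mem (hC : IsClosed C) (hcone : IsCone C)
    (hAC : ∀ x ∈ A, x - q ∈ C) : dirSet A q ⊆ C := by
  rintro a ⟨-, x, hx, -, hdir⟩
  exact hC.mem_of_tendsto hdir (Eventually.of_forall fun i =>
    hcone _ (hAC _ (hx i).1) _ (inv_nonneg.2 (norm_nonneg _)))

theorem dirSet_ker_subset (ℓ : E →L[ℝ] ℝ) : dirSet {v | ℓ v = 0} q ⊆ {v | ℓ v = 0} := by
  intro a ha
  have hq : ℓ q = 0 := by
    obtain ⟨-, x, hx, hxq, -⟩ := ha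
    exact (ℓ.isClosed_ker.mem_of_tendsto hxq (Eventually.of_forall fun i => (hx i).1) :)
  refine dirSet_subset_of_sub_mem ℓ.isClosed_ker (fun v hv t _ => ?_) (fun x hx => ?_) ha
  · show ℓ (t • v) = 0
    rw [map_smul, show ℓ v = 0 from hv, smul_zero]
  · show ℓ (x - q) = 0
    rw [map_sub, show ℓ x = 0 from hx, hq, sub_zero]

theorem mem_dirSet_of_isLittleO (ha : ‖a‖ = 1) {e : ℝ → E} (he : e =o[𝓝[>] 0] id)
    (hA : ∀ᶠ s in 𝓝[>] 0, q + s • a + e s ∈ A) : a ∈ dirSet A q := by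
  set d : ℝ → E := fun s => s • a + e s
  have hslope : Tendsto (fun s : ℝ => s⁻¹ • d s) (𝓝[>] 0) (𝓝 a) := by
    have : Tendsto (fun s : ℝ => a + s⁻¹ • e s) (𝓝[>] 0) (𝓝 (a + 0)) :=
      tendsto_const_nhds.add he.tendsto_inv_smul_nhds_zero
    rw [add_zero] at this
    refine this.congr' (eventually_mem_nhdsWithin.mono fun s (hs : 0 < s) => ?_)
    simp [d, smul_add, smul_smul, inv_mul_cancel₀ hs.ne']
  have hd : Tendsto d (𝓝[>] 0) (𝓝 0) := by
    have : Tendsto (fun s : ℝ => s • a + e s) (𝓝[>] 0) (𝓝 ((0 : ℝ) • a + 0)) :=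
      (tendsto_nhdsWithin_of_tendsto_nhds tendsto_id).smul_const a |>.add
        (he.trans_tendsto (tendsto_nhdsWithin_of_tendsto_nhds tendsto_id))
    simpa using this
  have hnorm : ∀ᶠ s in 𝓝[>] (0 : ℝ), ‖d s‖⁻¹ • d s = ‖s⁻¹ • d s‖⁻¹ • (s⁻¹ • d s) :=
    eventually_mem_nhdsWithin.mono fun s (hs : 0 < s) => by
      rw [norm_smul, norm_inv, Real.norm_of_nonneg hs.le, smul_smul, mul_inv, inv_inv]
      field_simp
  have hne : ∀ᶠ s in 𝓝[>] (0 : ℝ), d s ≠ 0 := by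
    filter_upwards [eventually_mem_nhdsWithin,
      hslope.eventually_ne (ne_zero_of_norm_ne_zero (ha.trans_ne one_ne_zero))]
      with s (hs : 0 < s) h
    exact fun h0 => h (by rw [h0, smul_zero])
  refine mem_dirSet_of_tendsto_s15 (x := fun s => q + d s) ((hA.and hne).mono fun s h => ?_).frequently
    ?_ ?_
  · simpa [d, add_assoc] using h
  · simpa using tendsto_const_nhds.add hd
  · have := (hslope.norm.inv₀ (by simp [ha])).smul hslope
    simp only [ha, inv_one, one_smul] at this
    simpa using this.congr' (hnorm.mono fun s h => h.symm)

theorem dirSet_subset_dirSet_smul {t : ℝ} (ht : 0 < t) :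
    dirSet A q ⊆ dirSet (t • A) (t • q) := by
  rintro a ⟨ha, x, hx, hxq, hdir⟩
  refine ⟨ha, fun i => t • x i, fun i => ⟨smul_mem_smul_set (hx i).1, ?_⟩, hxq.const_smul t,
    hdir.congr fun i => ?_⟩
  · exact (smul_right_injective E ht.ne').ne (hx i).2
  · rw [← smul_sub, norm_smul, Real.norm_of_nonneg ht.le, smul_smul]
    field_simp

theorem GDir_subset_of_dirSet_subset (hC : IsClosed C) (h : ∀ q ∈ A, dirSet A q ⊆ C) :
    GDir A p ⊆ C := by
  rintro a ⟨-, q, hqA, -, u, hu, hua⟩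
  exact hC.mem_of_tendsto hua (Eventually.of_forall fun m => h _ (hqA m) (hu m))

theorem mem_GDir_zero_of_mem_dirSet (hA : IsCone A) (hq : q ∈ A) (ha : a ∈ dirSet A q) :
    a ∈ GDir A 0 := by
  have ht : ∀ m : ℕ, (0 : ℝ) < 1 / (m + 1) := fun m => by positivity
  refine ⟨ha.1, fun m => (1 / (m + 1) : ℝ) • q, fun m => hA _ hq _ (ht m).le, ?_, fun _ => a,
    fun m => ?_, tendsto_const_nhds⟩
  · simpa using (tendsto_one_div_add_atTop_nhds_zero_nat (𝕜 := ℝ)).smul_const q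
  · refine dirSet_mono ?_ (dirSet_subset_dirSet_smul (ht m) ha)
    exact smul_set_subset_iff.2 fun x hx => hA x hx _ (ht m).le

theorem LGDir_eq_of_isCone (hC : IsCone C) (hsub : GDir A p ⊆ C)
    (hsup : ∀ a ∈ C, ‖a‖ = 1 → a ∈ GDir A p) (hne : ∃ v ∈ C, v ≠ 0) : LGDir A p = C := by
  have hnormalize : ∀ v ∈ C, v ≠ 0 → ‖v‖⁻¹ • v ∈ GDir A p := fun v hv hv0 =>
    hsup _ (hC v hv _ (inv_nonneg.2 (norm_nonneg v))) (norm_smul_inv_norm hv0)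
  ext v
  constructor
  · rintro ⟨a, ha, t, ht, rfl⟩
    exact hC a (hsub ha) t ht
  · intro hv
    by_cases hv0 : v = 0
    · obtain ⟨w, hw, hw0⟩ := hne
      exact ⟨_, hnormalize w hw hw0, 0, le_rfl, by rw [hv0, zero_smul]⟩
    · exact ⟨_, hnormalize v hv hv0, ‖v‖, norm_nonneg v,
        (smul_inv_smul₀ (norm_ne_zero_iff.2 hv0) v).symm⟩

theorem LGDir_zero_eq_of_isCone (hA : IsCone A) (hC : IsCone C) (hCc : IsClosed C)
    (hne : ∃ v ∈ C, v ≠ 0) (hsub : ∀ q ∈ A, dirSet A q ⊆ C)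
    (hsup : ∀ a ∈ C, ‖a‖ = 1 → ∃ q ∈ A, a ∈ dirSet A q) : LGDir A 0 = C :=
  LGDir_eq_of_isCone hC (GDir_subset_of_dirSet_subset hCc hsub)
    (fun a ha ha1 => let ⟨_, hq, haq⟩ := hsup a ha ha1; mem_GDir_zero_of_mem_dirSet hA hq haq) hne

end General

theorem exists_sq_add_sq_eq_one_and_mul_add_mul_eq {a b c : ℝ} (hab : 0 < a ^ 2 + b ^ 2)
    (hc : c ^ 2 ≤ a ^ 2 + b ^ 2) : ∃ u v : ℝ, u ^ 2 + v ^ 2 = 1 ∧ a * u + b * v = c := by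
  set w := √(a ^ 2 + b ^ 2 - c ^ 2)
  have hw : w ^ 2 = a ^ 2 + b ^ 2 - c ^ 2 := Real.sq_sqrt (by linarith)
  refine ⟨(a * c - b * w) / (a ^ 2 + b ^ 2), (b * c + a * w) / (a ^ 2 + b ^ 2), ?_, ?_⟩
  · field_simp
    linear_combination (a ^ 2 + b ^ 2) * hw
  · field_simp
    ring

local notation "ℝ³" => EuclideanSpace ℝ (Fin 3)

def upperLightCone : Set ℝ³ := {v | v 0 ^ 2 + v 1 ^ 2 = v 2 ^ 2 ∧ 0 ≤ v 2}

def lightConeExterior : Set ℝ³ := {v | v 2 ^ 2 ≤ v 0 ^ 2 + v 1 ^ 2}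

theorem isCone_upperLightCone : IsCone upperLightCone := by
  rintro v ⟨hv, hv2⟩ t ht
  simp only [upperLightCone, mem_ofPred_eq, PiLp.smul_apply, smul_eq_mul]
  exact ⟨by linear_combination t ^ 2 * hv, mul_nonneg ht hv2⟩

theorem isCone_lightConeExterior : IsCone lightConeExterior := by
  intro v hv t _
  simp only [lightConeExterior, mem_ofPred_eq, PiLp.smul_apply, smul_eq_mul] at hv ⊢
  nlinarith [sq_nonneg t]

theorem isClosed_lightConeExterior : IsClosed lightConeExterior :=
  isClosed_le (by fun_prop) (by fun_prop)

theorem sub_mem_lightConeExterior {x q : ℝ³} (hx : x ∈ upperLightCone)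
    (hq : q ∈ upperLightCone) : x - q ∈ lightConeExterior := by
  obtain ⟨hx, hx2⟩ := hx
  obtain ⟨hq, hq2⟩ := hq
  have hcs : x 0 * q 0 + x 1 * q 1 ≤ x 2 * q 2 :=
    le_of_sq_le_sq (by nlinarith [sq_nonneg (x 0 * q 1 - x 1 * q 0)]) (mul_nonneg hx2 hq2)
  simp only [lightConeExterior, mem_ofPred_eq, PiLp.sub_apply]
  linear_combination 2 * hcs - hx - hq

theorem hasDerivAt_sqrt_sq_add_sq {u v a b c : ℝ} (huv : u ^ 2 + v ^ 2 = 1)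
    (habc : a * u + b * v = c) :
    HasDerivAt (fun s => √((u + s * a) ^ 2 + (v + s * b) ^ 2)) c 0 := by
  have hu : HasDerivAt (fun s : ℝ => u + s * a) a 0 := (hasDerivAt_mul_const a).const_add u
  have hv : HasDerivAt (fun s : ℝ => v + s * b) b 0 := (hasDerivAt_mul_const b).const_add v
  refine (((hu.fun_pow 2).fun_add (hv.fun_pow 2)).sqrt (by simp [huv])).congr_deriv ?_
  simp only [zero_mul, add_zero, huv, Real.sqrt_one]
  linear_combination habc

theorem mem_dirSet_upperLightCone {u v : ℝ} (huv : u ^ 2 + v ^ 2 = 1) {a : ℝ³} (ha : ‖a‖ = 1)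
    (hau : a 0 * u + a 1 * v = a 2) : a ∈ dirSet upperLightCone !₂[u, v, 1] := by
  have hf := hasDerivAt_iff_isLittleO_nhds_zero.1 (hasDerivAt_sqrt_sq_add_sq huv hau)
  simp only [zero_add, zero_mul, add_zero, huv, Real.sqrt_one, smul_eq_mul] at hf
  set e : ℝ → ℝ³ := fun s =>
    EuclideanSpace.single 2 (√((u + s * a 0) ^ 2 + (v + s * a 1) ^ 2) - 1 - s * a 2)
  have he : e =o[𝓝[>] 0] id := by
    refine (isLittleO_norm_left.1 ?_).mono nhdsWithin_le_nhds
    simp only [e, PiLp.norm_single]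
    exact hf.norm_left
  refine mem_dirSet_of_isLittleO ha he (Eventually.of_forall fun s => ?_)
  have hy : (!₂[u, v, 1] : ℝ³) + s • a + e s =
      !₂[u + s * a 0, v + s * a 1, √((u + s * a 0) ^ 2 + (v + s * a 1) ^ 2)] := by
    ext i; fin_cases i <;> simp [e]
  rw [hy]
  exact ⟨by simp [Real.sq_sqrt (by positivity : 0 ≤ (u + s * a 0) ^ 2 + (v + s * a 1) ^ 2)],
    by simp⟩

theorem LGDir_upperLightCone : LGDir upperLightCone 0 = lightConeExterior := by
  refine LGDir_zero_eq_of_isCone isCone_upperLightCone isCone_lightConeExterior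
    isClosed_lightConeExterior ⟨!₂[1, 0, 0], by simp [lightConeExterior], ?_⟩
    (fun q hq => dirSet_subset_of_sub_mem isClosed_lightConeExterior isCone_lightConeExterior
      fun x hx => sub_mem_lightConeExterior hx hq) fun a ha ha1 => ?_
  · intro h; simpa using congrArg (· 0) h
  have hab : 0 < a 0 ^ 2 + a 1 ^ 2 := by
    have h3 := EuclideanSpace.real_norm_sq_eq a
    rw [ha1, Fin.sum_univ_three] at h3
    nlinarith [ha.out]
  obtain ⟨u, v, huv, hau⟩ := exists_sq_add_sq_eq_one_and_mul_add_mul_eq hab ha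
  exact ⟨!₂[u, v, 1], ⟨by simp [huv], by simp⟩, mem_dirSet_upperLightCone huv ha1 hau⟩

def squareCone : Set ℝ³ :=
  {w | ∃ q : ℝ³, (max |q 0| |q 1| = 1 ∧ q 2 = 1) ∧ ∃ t : ℝ, 0 ≤ t ∧ w = t • q}

def squareConePlanes : Set ℝ³ :=
  {v | v 0 - v 2 = 0} ∪ {v | v 1 + v 2 = 0} ∪ {v | v 0 + v 2 = 0} ∪ {v | v 1 - v 2 = 0}

theorem mem_squareCone_iff {w : ℝ³} : w ∈ squareCone ↔ max |w 0| |w 1| = w 2 := by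
  constructor
  · rintro ⟨q, ⟨hq, hq2⟩, t, ht, rfl⟩
    simp [abs_mul, abs_of_nonneg ht, ← mul_max_of_nonneg _ _ ht, hq, hq2]
  · intro hw
    by_cases hw2 : w 2 = 0
    · refine ⟨!₂[1, 0, 1], by simp, 0, le_rfl, ?_⟩
      have h0 : |w 0| = 0 := le_antisymm (hw2 ▸ hw ▸ le_max_left _ _) (abs_nonneg _)
      have h1 : |w 1| = 0 := le_antisymm (hw2 ▸ hw ▸ le_max_right _ _) (abs_nonneg _)
      ext i; fin_cases i <;> simp_all
    · have hpos : 0 < (w 2)⁻¹ :=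
        inv_pos.2 ((hw ▸ (abs_nonneg (w 0)).trans (le_max_left _ (|w 1|))).lt_of_ne' hw2)
      refine ⟨(w 2)⁻¹ • w, ⟨?_, by simp [hw2]⟩, w 2, (inv_pos.1 hpos).le,
        (smul_inv_smul₀ hw2 w).symm⟩
      simp [abs_mul, abs_of_pos hpos, ← mul_max_of_nonneg _ _ hpos.le, hw, hw2]

theorem isCone_squareCone : IsCone squareCone := by
  intro w hw t ht
  rw [mem_squareCone_iff] at hw ⊢
  simp [abs_mul, abs_of_nonneg ht, ← mul_max_of_nonneg _ _ ht, hw]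

theorem squareCone_subset_squareConePlanes : squareCone ⊆ squareConePlanes := by
  intro w hw
  rw [mem_squareCone_iff] at hw
  rcases max_choice |w 0| |w 1| with h | h <;> rw [h] at hw
  · rcases abs_choice (w 0) with h0 | h0 <;> rw [h0] at hw
    · exact Or.inl (Or.inl (Or.inl (sub_eq_zero.2 hw)))
    · exact Or.inl (Or.inr (show w 0 + w 2 = 0 by linarith))
  · rcases abs_choice (w 1) with h1 | h1 <;> rw [h1] at hw
    · exact Or.inr (sub_eq_zero.2 hw)
    · exact Or.inl (Or.inl (Or.inr (show w 1 + w 2 = 0 by linarith)))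

theorem isCone_squareConePlanes : IsCone squareConePlanes := by
  rintro v (((h | h) | h) | h) t -
  all_goals
    simp only [squareConePlanes, mem_union, mem_ofPred_eq, PiLp.smul_apply, smul_eq_mul] at h ⊢
  · exact Or.inl (Or.inl (Or.inl (by linear_combination t * h)))
  · exact Or.inl (Or.inl (Or.inr (by linear_combination t * h)))
  · exact Or.inl (Or.inr (by linear_combination t * h))
  · exact Or.inr (by linear_combination t * h)

theorem isClosed_squareConePlanes : IsClosed squareConePlanes :=
  (((isClosed_eq (by fun_prop) (by fun_prop)).union
    (isClosed_eq (by fun_prop) (by fun_prop))).union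
    (isClosed_eq (by fun_prop) (by fun_prop))).union (isClosed_eq (by fun_prop) (by fun_prop))

theorem dirSet_squareCone_subset (q : ℝ³) : dirSet squareCone q ⊆ squareConePlanes := by
  have h₁ : dirSet {v : ℝ³ | v 0 - v 2 = 0} q ⊆ {v | v 0 - v 2 = 0} :=
    dirSet_ker_subset (q := q) (EuclideanSpace.proj 0 - EuclideanSpace.proj 2)
  have h₂ : dirSet {v : ℝ³ | v 1 + v 2 = 0} q ⊆ {v | v 1 + v 2 = 0} :=
    dirSet_ker_subset (q := q) (EuclideanSpace.proj 1 + EuclideanSpace.proj 2)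
  have h₃ : dirSet {v : ℝ³ | v 0 + v 2 = 0} q ⊆ {v | v 0 + v 2 = 0} :=
    dirSet_ker_subset (q := q) (EuclideanSpace.proj 0 + EuclideanSpace.proj 2)
  have h₄ : dirSet {v : ℝ³ | v 1 - v 2 = 0} q ⊆ {v | v 1 - v 2 = 0} :=
    dirSet_ker_subset (q := q) (EuclideanSpace.proj 1 - EuclideanSpace.proj 2)
  refine (dirSet_mono squareCone_subset_squareConePlanes).trans ?_
  simp only [squareConePlanes, dirSet_union]
  exact union_subset_union (union_subset_union (union_subset_union h₁ h₂) h₃) h₄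

theorem max_abs_add_mul_abs_mul_eq {ε s b c d : ℝ} (hε : |ε| = 1) (hd : d = ε * c)
    (hb : |b| ≤ 1) (hc : |c| ≤ 1) (hs : s ∈ Ioo 0 (1 / 2)) :
    max |ε + s * d| |s * b| = 1 + s * c := by
  obtain ⟨hs0, hs1⟩ := hs
  have hsc : 0 ≤ 1 + s * c := by nlinarith [neg_abs_le c]
  have hεsd : |ε + s * d| = 1 + s * c := by
    rw [hd, show ε + s * (ε * c) = ε * (1 + s * c) by ring, abs_mul, hε, one_mul,
      abs_of_nonneg hsc]
  rw [hεsd, max_eq_left]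
  rw [abs_mul, abs_of_pos hs0]
  nlinarith [neg_abs_le c]

theorem exists_mem_dirSet_squareCone {a : ℝ³} (ha : ‖a‖ = 1) (hP : a ∈ squareConePlanes) :
    ∃ q ∈ squareCone, a ∈ dirSet squareCone q := by
  have hle : ∀ i, |a i| ≤ 1 := fun i => ha ▸ PiLp.norm_apply_le a i
  have hdir : ∀ q,
      (∀ᶠ s in 𝓝[>] (0 : ℝ), max |(q + s • a) 0| |(q + s • a) 1| = (q + s • a) 2) →
      a ∈ dirSet squareCone q := fun q h =>
    mem_dirSet_of_isLittleO (e := 0) ha (isLittleO_zero _ _)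
      (h.mono fun s hs => by simpa [mem_squareCone_iff] using hs)
  have hs := Ioo_mem_nhdsGT (show (0 : ℝ) < 1 / 2 by norm_num)
  rcases hP with (((h | h) | h) | h)
  · refine ⟨!₂[1, 0, 1], by simp [mem_squareCone_iff], hdir _ ?_⟩
    filter_upwards [hs] with s hs
    simpa using max_abs_add_mul_abs_mul_eq abs_one (by linarith [h.out]) (hle 1) (hle 2) hs
  · refine ⟨!₂[0, -1, 1], by simp [mem_squareCone_iff], hdir _ ?_⟩
    filter_upwards [hs] with s hs
    rw [max_comm]
    simpa using
      max_abs_add_mul_abs_mul_eq (by simp) (by linarith [h.out]) (hle 0) (hle 2) hs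
  · refine ⟨!₂[-1, 0, 1], by simp [mem_squareCone_iff], hdir _ ?_⟩
    filter_upwards [hs] with s hs
    simpa using
      max_abs_add_mul_abs_mul_eq (by simp) (by linarith [h.out]) (hle 1) (hle 2) hs
  · refine ⟨!₂[0, 1, 1], by simp [mem_squareCone_iff], hdir _ ?_⟩
    filter_upwards [hs] with s hs
    rw [max_comm]
    simpa using max_abs_add_mul_abs_mul_eq abs_one (by linarith [h.out]) (hle 0) (hle 2) hs

theorem LGDir_squareCone : LGDir squareCone 0 = squareConePlanes :=
  LGDir_zero_eq_of_isCone isCone_squareCone isCone_squareConePlanes isClosed_squareConePlanes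
    ⟨!₂[1, 0, 1], Or.inl (Or.inl (Or.inl (by simp))), fun h => by simpa using congrArg (· 0) h⟩
    (fun q _ => dirSet_squareCone_subset q) fun _ ha ha1 => exists_mem_dirSet_squareCone ha1 ha

theorem stmt15 :
    LGDir {v : EuclideanSpace ℝ (Fin 3) | v 0 ^ 2 + v 1 ^ 2 = v 2 ^ 2 ∧ 0 ≤ v 2} 0
        = {v : EuclideanSpace ℝ (Fin 3) | v 2 ^ 2 ≤ v 0 ^ 2 + v 1 ^ 2} ∧
    LGDir {w : EuclideanSpace ℝ (Fin 3) | ∃ q : EuclideanSpace ℝ (Fin 3),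
          (max |q 0| |q 1| = 1 ∧ q 2 = 1) ∧ ∃ t : ℝ, 0 ≤ t ∧ w = t • q} 0
        = {v : EuclideanSpace ℝ (Fin 3) | v 0 - v 2 = 0} ∪
          {v : EuclideanSpace ℝ (Fin 3) | v 1 + v 2 = 0} ∪
          {v : EuclideanSpace ℝ (Fin 3) | v 0 + v 2 = 0} ∪
          {v : EuclideanSpace ℝ (Fin 3) | v 1 - v 2 = 0} :=
  ⟨LGDir_upperLightCone, LGDir_squareCone⟩
end
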